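/- arXiv:1707.05296 — 8 statements merged into one kernel-verified Lean document; each statement's English description precedes it below -/
import Mathlib

section
/- Let ρ be the probability measure on ℝⁿ with strictly positive density ρ(z) = exp(−H(z)) with respect to Lebesgue measure, where H is continuously differentiable. Let φ : ℝⁿ → ℝⁿ be a continuously differentiable vector field, λ : ℝⁿ → [0,∞) a measurable event rate with ∫ λ dρ < ∞, Q a Markov kernel from ℝⁿ to ℝⁿ, and S : ℝⁿ → ℝⁿ a measurable map whose pushforward of ρ equals ρ. Assume: (i) λ(S(z)) − λ(z) = div φ(z) − ⟨∇H(z), φ(z)⟩ for all z; (ii) for every bounded measurable f, ∫∫ f(z′) λ(z) Q(z,dz′) ρ(dz) = ∫ f(z′) λ(S(z′)) ρ(dz′). Then for every compactly supported continuously differentiable function f : ℝⁿ → ℝ, ∫ [ ⟨φ(z), ∇f(z)⟩ + λ(z) ∫ (f(z′) − f(z)) Q(z,dz′) ] ρ(dz) = 0; that is, the generator of the piecewise-deterministic Markov process with drift φ, rate λ and event kernel Q integrates to zero against ρ, so ρ is invariant. -/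
/-! The drift term is handled by integration by parts: for the compactly supported `C¹` vector
field `g = (f e^{-H}) • φ` one has `div g = e^{-H} (⟪φ, ∇f⟫ + (div φ - ⟪∇H, φ⟫) f)`, and
`∫ div g = 0` because the derivative of a compactly supported function integrates to zero against
Lebesgue measure. Hence `∫ ⟪φ, ∇f⟫ dρ = -∫ (div φ - ⟪∇H, φ⟫) f dρ`. The balance condition on `Q`
turns the jump term into `∫ (λ ∘ S - λ) f dρ`, which the rate condition identifies with
`∫ (div φ - ⟪∇H, φ⟫) f dρ`. -/

open MeasureTheory ProbabilityTheory Real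
open scoped RealInnerProductSpace

/-- The divergence of a vector field on `ℝⁿ`, defined as the trace of its derivative. -/
noncomputable def pdmpDivergence {n : ℕ}
    (φ : EuclideanSpace ℝ (Fin n) → EuclideanSpace ℝ (Fin n))
    (z : EuclideanSpace ℝ (Fin n)) : ℝ :=
  LinearMap.trace ℝ (EuclideanSpace ℝ (Fin n)) (fderiv ℝ φ z).toLinearMap

section IntegralFDeriv

variable {E F : Type*} [NormedAddCommGroup E] [NormedSpace ℝ E] [MeasurableSpace E] [BorelSpace E]
  [NormedAddCommGroup F] [NormedSpace ℝ F] {μ : Measure E}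

theorem integrable_fderiv_of_hasCompactSupport [IsFiniteMeasureOnCompacts μ] {g : E → F}
    (hg : ContDiff ℝ 1 g) (hc : HasCompactSupport g) : Integrable (fderiv ℝ g) μ :=
  (hg.continuous_fderiv one_ne_zero).integrable_of_hasCompactSupport (hc.fderiv ℝ)

theorem integral_fderiv_eq_zero [FiniteDimensional ℝ E] [μ.IsAddHaarMeasure] {g : E → F}
    (hg : ContDiff ℝ 1 g) (hc : HasCompactSupport g) :
    ∫ x, fderiv ℝ g x ∂μ = 0 := by
  ext v
  rw [ContinuousLinearMap.integral_apply (integrable_fderiv_of_hasCompactSupport hg hc),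
    zero_apply]
  have hg' : Integrable (fun x => fderiv ℝ g x v) μ :=
    ((hg.continuous_fderiv one_ne_zero).clm_apply continuous_const).integrable_of_hasCompactSupport
      (hc.fderiv_apply ℝ v)
  simpa using integral_smul_fderiv_eq_neg_fderiv_smul_of_integrable (μ := μ) (v := v)
    (f := fun _ => (1 : ℝ)) (by simp) (by simpa using hg')
    (by simpa using hg.continuous.integrable_of_hasCompactSupport hc)
    (fun x _ => differentiableAt_const _) (fun x _ => hg.differentiable one_ne_zero x)

end IntegralFDeriv

noncomputable def traceCLM (E : Type*) [NormedAddCommGroup E] [NormedSpace ℝ E]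
    [FiniteDimensional ℝ E] : (E →L[ℝ] E) →L[ℝ] ℝ :=
  LinearMap.toContinuousLinearMap (LinearMap.trace ℝ E ∘ₗ ContinuousLinearMap.coeLM ℝ)

theorem traceCLM_smulRight {E : Type*} [NormedAddCommGroup E] [NormedSpace ℝ E]
    [FiniteDimensional ℝ E] (ℓ : E →L[ℝ] ℝ) (v : E) :
    traceCLM E (ℓ.smulRight v) = ℓ v :=
  LinearMap.trace_smulRight ℓ.toLinearMap v

section Divergence

variable {n : ℕ}

theorem pdmpDivergence_eq_traceCLM (φ : EuclideanSpace ℝ (Fin n) → EuclideanSpace ℝ (Fin n))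
    (z : EuclideanSpace ℝ (Fin n)) :
    pdmpDivergence φ z = traceCLM _ (fderiv ℝ φ z) :=
  rfl

theorem continuous_pdmpDivergence {φ : EuclideanSpace ℝ (Fin n) → EuclideanSpace ℝ (Fin n)}
    (hφ : ContDiff ℝ 1 φ) : Continuous (pdmpDivergence φ) :=
  (traceCLM _).continuous.comp (hφ.continuous_fderiv one_ne_zero)

theorem integral_pdmpDivergence_eq_zero
    {g : EuclideanSpace ℝ (Fin n) → EuclideanSpace ℝ (Fin n)}
    (hg : ContDiff ℝ 1 g) (hc : HasCompactSupport g) :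
    ∫ z, pdmpDivergence g z = 0 := by
  simp_rw [pdmpDivergence_eq_traceCLM]
  rw [(traceCLM _).integral_comp_comm (integrable_fderiv_of_hasCompactSupport hg hc),
    integral_fderiv_eq_zero hg hc, map_zero]

theorem pdmpDivergence_smul {c : EuclideanSpace ℝ (Fin n) → ℝ}
    {φ : EuclideanSpace ℝ (Fin n) → EuclideanSpace ℝ (Fin n)} {z : EuclideanSpace ℝ (Fin n)}
    (hc : DifferentiableAt ℝ c z) (hφ : DifferentiableAt ℝ φ z) :
    pdmpDivergence (fun y => c y • φ y) z = c z * pdmpDivergence φ z + fderiv ℝ c z (φ z) := by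
  rw [pdmpDivergence_eq_traceCLM, pdmpDivergence_eq_traceCLM, fderiv_fun_smul hc hφ, map_add,
    map_smul, traceCLM_smulRight, smul_eq_mul]

end Divergence

theorem HasCompactSupport.clm_apply {X E F : Type*} [TopologicalSpace X]
    [NormedAddCommGroup E] [NormedSpace ℝ E] [NormedAddCommGroup F] [NormedSpace ℝ F]
    {L : X → E →L[ℝ] F} (hL : HasCompactSupport L) (v : X → E) :
    HasCompactSupport fun x => L x (v x) :=
  hL.mono fun x hx hLx => hx (by simp [hLx])

section InnerGradient

variable {E : Type*} [NormedAddCommGroup E] [InnerProductSpace ℝ E] [CompleteSpace E]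
  {φ : E → E} {f : E → ℝ}

theorem continuous_inner_gradient (hφ : Continuous φ) (hf : ContDiff ℝ 1 f) :
    Continuous fun z => ⟪φ z, gradient f z⟫ := by
  simp only [inner_gradient_right, conj_trivial]
  exact (hf.continuous_fderiv one_ne_zero).clm_apply hφ

theorem HasCompactSupport.inner_gradient (hf : HasCompactSupport f) (φ : E → E) :
    HasCompactSupport fun z => ⟪φ z, gradient f z⟫ := by
  simp only [inner_gradient_right, conj_trivial]
  exact (hf.fderiv ℝ).clm_apply φ

end InnerGradient

theorem integral_withDensity_ofReal {X : Type*} [MeasurableSpace X] {μ : Measure X} {w : X → ℝ}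
    (hw : Measurable w) (hw_nonneg : ∀ x, 0 ≤ w x) (g : X → ℝ) :
    ∫ x, g x ∂μ.withDensity (fun x => ENNReal.ofReal (w x)) = ∫ x, w x * g x ∂μ := by
  rw [integral_withDensity_eq_integral_toReal_smul hw.ennreal_ofReal
    (ae_of_all _ fun _ => ENNReal.ofReal_lt_top)]
  simp_rw [ENNReal.toReal_ofReal (hw_nonneg _), smul_eq_mul]

section GibbsMeasure

variable {n : ℕ} {H f : EuclideanSpace ℝ (Fin n) → ℝ}
  {φ : EuclideanSpace ℝ (Fin n) → EuclideanSpace ℝ (Fin n)}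

theorem pdmpDivergence_mul_exp_neg_smul (hH : ContDiff ℝ 1 H) (hf : ContDiff ℝ 1 f)
    (hφ : ContDiff ℝ 1 φ) (z : EuclideanSpace ℝ (Fin n)) :
    pdmpDivergence (fun y => (f y * exp (-H y)) • φ y) z
      = exp (-H z) * (⟪φ z, gradient f z⟫ + (pdmpDivergence φ z - ⟪gradient H z, φ z⟫) * f z) := by
  have hw : HasFDerivAt (fun y => exp (-H y)) (exp (-H z) • -fderiv ℝ H z) z :=
    (hH.differentiable one_ne_zero z).hasFDerivAt.neg.exp
  have hc := (hf.differentiable one_ne_zero z).hasFDerivAt.fun_mul hw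
  rw [pdmpDivergence_smul hc.differentiableAt (hφ.differentiable one_ne_zero z), hc.fderiv,
    inner_gradient_left, inner_gradient_right]
  simp only [add_apply, smul_apply, neg_apply, smul_eq_mul, conj_trivial]
  ring

theorem integral_inner_gradient_withDensity_exp_neg (hH : ContDiff ℝ 1 H) (hφ : ContDiff ℝ 1 φ)
    (hf : ContDiff ℝ 1 f) (hcf : HasCompactSupport f) :
    ∫ z, ⟪φ z, gradient f z⟫ ∂volume.withDensity (fun z => ENNReal.ofReal (exp (-H z)))
      = -∫ z, (pdmpDivergence φ z - ⟪gradient H z, φ z⟫) * f z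
          ∂volume.withDensity (fun z => ENNReal.ofReal (exp (-H z))) := by
  have hw : ContDiff ℝ 1 fun z => exp (-H z) := contDiff_exp.comp hH.neg
  have hdrift : Integrable (fun z => exp (-H z) * ⟪φ z, gradient f z⟫) :=
    (hw.continuous.mul (continuous_inner_gradient hφ.continuous hf)).integrable_of_hasCompactSupport
      (hcf.inner_gradient φ).mul_left
  have hdiv :
      Integrable (fun z => exp (-H z) * ((pdmpDivergence φ z - ⟪gradient H z, φ z⟫) * f z)) := by
    simp only [inner_gradient_left]
    refine Continuous.integrable_of_hasCompactSupport ?_ hcf.mul_left.mul_left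
    exact hw.continuous.mul (((continuous_pdmpDivergence hφ).sub
      ((hH.continuous_fderiv one_ne_zero).clm_apply hφ.continuous)).mul hf.continuous)
  rw [integral_withDensity_ofReal hw.continuous.measurable (fun _ => (exp_pos _).le),
    integral_withDensity_ofReal hw.continuous.measurable (fun _ => (exp_pos _).le),
    eq_neg_iff_add_eq_zero, ← integral_add hdrift hdiv]
  simp_rw [← mul_add, ← pdmpDivergence_mul_exp_neg_smul hH hf hφ]
  exact integral_pdmpDivergence_eq_zero ((hf.mul hw).smul hφ) hcf.mul_right.smul_right

end GibbsMeasure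

section Jump

variable {X : Type*} [MeasurableSpace X] {ρ : Measure X} {Q : Kernel X X} [IsMarkovKernel Q]
  {lam m f : X → ℝ} {C : ℝ}

noncomputable def pdmpJump (lam : X → ℝ) (Q : Kernel X X) (f : X → ℝ) (z : X) : ℝ :=
  lam z * ∫ z', (f z' - f z) ∂Q z

theorem pdmpJump_eq (hf : Measurable f) (hC : ∀ z, ‖f z‖ ≤ C) (z : X) :
    pdmpJump lam Q f z = lam z * ∫ z', f z' ∂Q z - lam z * f z := by
  have hfQ : Integrable f (Q z) :=
    .of_bound hf.aestronglyMeasurable C (ae_of_all _ hC)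
  rw [pdmpJump, integral_sub hfQ (integrable_const (f z)), integral_const, mul_sub]
  simp

theorem integrable_mul_integral_kernel (hlam : Integrable lam ρ) (hf : Measurable f)
    (hC : ∀ z, ‖f z‖ ≤ C) : Integrable (fun z => lam z * ∫ z', f z' ∂Q z) ρ := by
  refine hlam.mul_bdd (c := C) hf.stronglyMeasurable.integral_kernel.aestronglyMeasurable
    (ae_of_all _ fun z => ?_)
  simpa using norm_integral_le_of_norm_le_const (μ := Q z) (ae_of_all _ hC)

theorem integrable_pdmpJump (hlam : Integrable lam ρ) (hf : Measurable f) (hC : ∀ z, ‖f z‖ ≤ C) :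
    Integrable (pdmpJump lam Q f) ρ := by
  rw [funext (pdmpJump_eq hf hC)]
  exact (integrable_mul_integral_kernel hlam hf hC).sub
    (hlam.mul_bdd hf.aestronglyMeasurable (ae_of_all _ hC))

theorem integral_pdmpJump (hlam : Integrable lam ρ) (hm : Integrable m ρ) (hf : Measurable f)
    (hC : ∀ z, ‖f z‖ ≤ C) (hQf : ∫ z, lam z * ∫ z', f z' ∂Q z ∂ρ = ∫ z, m z * f z ∂ρ) :
    ∫ z, pdmpJump lam Q f z ∂ρ = ∫ z, (m z - lam z) * f z ∂ρ := by
  have hlamf : Integrable (fun z => lam z * f z) ρ :=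
    hlam.mul_bdd hf.aestronglyMeasurable (ae_of_all _ hC)
  have hmf : Integrable (fun z => m z * f z) ρ :=
    hm.mul_bdd hf.aestronglyMeasurable (ae_of_all _ hC)
  simp_rw [pdmpJump_eq hf hC, sub_mul]
  rw [integral_sub (integrable_mul_integral_kernel hlam hf hC) hlamf, hQf,
    integral_sub hmf hlamf]

end Jump

theorem pdmp_generator_integral_zero_general {n : ℕ}
    (H : EuclideanSpace ℝ (Fin n) → ℝ) (hH : ContDiff ℝ 1 H)
    (ρ : Measure (EuclideanSpace ℝ (Fin n)))
    (hρ : ρ = volume.withDensity (fun z => ENNReal.ofReal (Real.exp (-H z))))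
    (hprob : IsProbabilityMeasure ρ)
    (φv : EuclideanSpace ℝ (Fin n) → EuclideanSpace ℝ (Fin n)) (hφ : ContDiff ℝ 1 φv)
    (lam : EuclideanSpace ℝ (Fin n) → ℝ) (hlam_int : Integrable lam ρ)
    (Q : Kernel (EuclideanSpace ℝ (Fin n)) (EuclideanSpace ℝ (Fin n))) [IsMarkovKernel Q]
    (S : EuclideanSpace ℝ (Fin n) → EuclideanSpace ℝ (Fin n)) (hS_meas : Measurable S)
    (hS_pres : Measure.map S ρ = ρ)
    (hrate : ∀ z, lam (S z) - lam z = pdmpDivergence φv z - ⟪gradient H z, φv z⟫)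
    (hQ : ∀ f : EuclideanSpace ℝ (Fin n) → ℝ, Measurable f → (∃ C, ∀ z, |f z| ≤ C) →
      ∫ z, lam z * ∫ z', f z' ∂(Q z) ∂ρ = ∫ z', lam (S z') * f z' ∂ρ) :
    ∀ f : EuclideanSpace ℝ (Fin n) → ℝ, ContDiff ℝ 1 f → HasCompactSupport f →
      ∫ z, (⟪φv z, gradient f z⟫ + lam z * ∫ z', (f z' - f z) ∂(Q z)) ∂ρ = 0 := by
  intro f hf hcf
  have hf_meas : Measurable f := hf.continuous.measurable
  obtain ⟨C, hC⟩ := hf.continuous.bounded_above_of_compact_support hcf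
  have hlamS : Integrable (fun z => lam (S z)) ρ :=
    (hS_pres.symm ▸ hlam_int).comp_measurable hS_meas
  have hdrift : Integrable (fun z => ⟪φv z, gradient f z⟫) ρ :=
    (continuous_inner_gradient hφ.continuous hf).integrable_of_hasCompactSupport
      (hcf.inner_gradient φv)
  have hibp : ∫ z, ⟪φv z, gradient f z⟫ ∂ρ
      = -∫ z, (pdmpDivergence φv z - ⟪gradient H z, φv z⟫) * f z ∂ρ :=
    hρ ▸ integral_inner_gradient_withDensity_exp_neg hH hφ hf hcf
  have hjump : ∫ z, pdmpJump lam Q f z ∂ρ = ∫ z, (lam (S z) - lam z) * f z ∂ρ :=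
    integral_pdmpJump hlam_int hlamS hf_meas hC
      (hQ f hf_meas ⟨C, fun z => by simpa using hC z⟩)
  change ∫ z, (⟪φv z, gradient f z⟫ + pdmpJump lam Q f z) ∂ρ = 0
  rw [integral_add hdrift (integrable_pdmpJump hlam_int hf_meas hC), hibp, hjump]
  simp_rw [hrate, neg_add_cancel]

/-- sufficient conditions for invariance of a PDMP (global methods). -/
theorem pdmp_generator_integral_zero {n : ℕ}
    (H : EuclideanSpace ℝ (Fin n) → ℝ) (hH : ContDiff ℝ 1 H)
    (ρ : Measure (EuclideanSpace ℝ (Fin n)))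
    (hρ : ρ = volume.withDensity (fun z => ENNReal.ofReal (Real.exp (-H z))))
    (hprob : IsProbabilityMeasure ρ)
    (φv : EuclideanSpace ℝ (Fin n) → EuclideanSpace ℝ (Fin n)) (hφ : ContDiff ℝ 1 φv)
    (lam : EuclideanSpace ℝ (Fin n) → ℝ) (hlam_meas : Measurable lam)
    (hlam_nonneg : ∀ z, 0 ≤ lam z) (hlam_int : Integrable lam ρ)
    (Q : Kernel (EuclideanSpace ℝ (Fin n)) (EuclideanSpace ℝ (Fin n))) [IsMarkovKernel Q]
    (S : EuclideanSpace ℝ (Fin n) → EuclideanSpace ℝ (Fin n)) (hS_meas : Measurable S)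
    (hS_pres : Measure.map S ρ = ρ)
    (hrate : ∀ z, lam (S z) - lam z = pdmpDivergence φv z - ⟪gradient H z, φv z⟫)
    (hQ : ∀ f : EuclideanSpace ℝ (Fin n) → ℝ, Measurable f → (∃ C, ∀ z, |f z| ≤ C) →
      ∫ z, lam z * ∫ z', f z' ∂(Q z) ∂ρ = ∫ z', lam (S z') * f z' ∂ρ) :
    ∀ f : EuclideanSpace ℝ (Fin n) → ℝ, ContDiff ℝ 1 f → HasCompactSupport f →
      ∫ z, (⟪φv z, gradient f z⟫ + lam z * ∫ z', (f z' - f z) ∂(Q z)) ∂ρ = 0 :=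
  pdmp_generator_integral_zero_general H hH ρ hρ hprob φv hφ lam hlam_int Q S hS_meas hS_pres hrate
    hQ
end

section
/- Let ρ be the probability measure on ℝⁿ with strictly positive density ρ(z) = exp(−H(z)) with respect to Lebesgue measure, where H is continuously differentiable. Let φ : ℝⁿ → ℝⁿ be a continuously differentiable vector field, let λ₁,…,λ_m : ℝⁿ → [0,∞) be measurable with λ := Σᵢ λᵢ satisfying ∫ λ dρ < ∞, let Q₁,…,Q_m be Markov kernels on ℝⁿ, and define the mixture kernel Q(z,·) = Σᵢ (λᵢ(z)/λ(z)) Qᵢ(z,·) wherever λ(z) > 0. Let S : ℝⁿ → ℝⁿ be a measurable map whose pushforward of ρ equals ρ. Assume: (i) Σᵢ (λᵢ(S(z)) − λᵢ(z)) = div φ(z) − ⟨∇H(z), φ(z)⟩ for all z; (ii) for each i and every bounded measurable f, ∫∫ f(z′) λᵢ(z) Qᵢ(z,dz′) ρ(dz) = ∫ f(z′) λᵢ(S(z′)) ρ(dz′). Then for every compactly supported continuously differentiable f : ℝⁿ → ℝ, ∫ [ ⟨φ(z), ∇f(z)⟩ + λ(z) ∫ (f(z′) − f(z)) Q(z,dz′)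 ] ρ(dz) = 0, so ρ is invariant for the local PDMP. -/
open MeasureTheory ProbabilityTheory Real
open scoped RealInnerProductSpace

/-!
Integrating the generator against `ρ` splits it into a drift part and a jump part. Integrating by
parts against Lebesgue measure, with the field `e^{-H} φ` whose divergence is
`e^{-H} (div φ - ⟪∇H, φ⟫)`, turns the drift part into `∫ f (⟪∇H, φ⟫ - div φ) dρ`. The mixture
structure of `Q` rewrites the jump integrand as `∑ᵢ λᵢ(z) (Qᵢ f(z) - f(z))`, and the skew-balance
condition (ii) moves each `Qᵢ` onto `ρ` at the price of the rate `λᵢ ∘ S`, so the jump part is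
`∫ f ∑ᵢ (λᵢ ∘ S - λᵢ) dρ`. Condition (i) says exactly that the two parts cancel.
-/

section Divergence

variable {E : Type*} [NormedAddCommGroup E] [InnerProductSpace ℝ E]

theorem trace_fderiv_eq_sum_fderiv_inner {V : E → E} {x : E} (hV : DifferentiableAt ℝ V x)
    {ι : Type*} [Fintype ι] (b : OrthonormalBasis ι ℝ E) :
    LinearMap.trace ℝ E (fderiv ℝ V x).toLinearMap
      = ∑ k, fderiv ℝ (fun y => ⟪b k, V y⟫) x (b k) := by
  rw [LinearMap.trace_eq_sum_inner _ b]
  refine Finset.sum_congr rfl fun k _ => ?_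
  rw [fderiv_inner_apply ℝ (differentiableAt_const _) hV]
  simp

variable [FiniteDimensional ℝ E]

theorem trace_fderiv_smul {w : E → ℝ} {V : E → E} {x : E}
    (hw : DifferentiableAt ℝ w x) (hV : DifferentiableAt ℝ V x) :
    LinearMap.trace ℝ E (fderiv ℝ (fun y => w y • V y) x).toLinearMap
      = fderiv ℝ w x (V x) + w x * LinearMap.trace ℝ E (fderiv ℝ V x).toLinearMap := by
  rw [fderiv_fun_smul hw hV, ContinuousLinearMap.toLinearMap_add,
    ContinuousLinearMap.toLinearMap_smul, map_add, map_smul, smul_eq_mul, add_comm]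
  congr 1
  exact LinearMap.trace_smulRight _ _

variable [MeasurableSpace E] [BorelSpace E] (μ : Measure E) [μ.IsAddHaarMeasure]

theorem integral_fderiv_apply_eq_neg_integral_mul_trace {f : E → ℝ} {V : E → E}
    (hf : ContDiff ℝ 1 f) (hfc : HasCompactSupport f) (hV : ContDiff ℝ 1 V) :
    ∫ x, fderiv ℝ f x (V x) ∂μ
      = -∫ x, f x * LinearMap.trace ℝ E (fderiv ℝ V x).toLinearMap ∂μ := by
  let b := stdOrthonormalBasis ℝ E
  let g : _ → E → ℝ := fun k y => ⟪b k, V y⟫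
  have hg k : ContDiff ℝ 1 (g k) := contDiff_const.inner ℝ hV
  have hg' k : Continuous fun x => fderiv ℝ (g k) x (b k) :=
    ((hg k).continuous_fderiv one_ne_zero).clm_apply continuous_const
  have hf' k : Continuous fun x => fderiv ℝ f x (b k) :=
    (hf.continuous_fderiv one_ne_zero).clm_apply continuous_const
  have hint k : Integrable (fun x => g k x * fderiv ℝ f x (b k)) μ :=
    ((hg k).continuous.mul (hf' k)).integrable_of_hasCompactSupport
      (hfc.fderiv_apply ℝ (b k)).mul_left
  have hint' k : Integrable (fun x => fderiv ℝ (g k) x (b k) * f x) μ :=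
    ((hg' k).mul hf.continuous).integrable_of_hasCompactSupport hfc.mul_left
  have ibp k : ∫ x, g k x * fderiv ℝ f x (b k) ∂μ = -∫ x, fderiv ℝ (g k) x (b k) * f x ∂μ :=
    integral_mul_fderiv_eq_neg_fderiv_mul_of_integrable (hint' k) (hint k)
      (((hg k).continuous.mul hf.continuous).integrable_of_hasCompactSupport hfc.mul_left)
      (fun x _ => ((hg k).differentiable one_ne_zero).differentiableAt)
      (fun x _ => (hf.differentiable one_ne_zero).differentiableAt)
  calc ∫ x, fderiv ℝ f x (V x) ∂μ = ∫ x, ∑ k, g k x * fderiv ℝ f x (b k) ∂μ := by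
        congr 1 with x
        conv_lhs => rw [← b.sum_repr' (V x)]
        simp [g]
    _ = -∫ x, ∑ k, fderiv ℝ (g k) x (b k) * f x ∂μ := by
        rw [integral_finsetSum _ fun k _ => hint k, integral_finsetSum _ fun k _ => hint' k,
          ← Finset.sum_neg_distrib]
        exact Finset.sum_congr rfl fun k _ => ibp k
    _ = -∫ x, f x * LinearMap.trace ℝ E (fderiv ℝ V x).toLinearMap ∂μ := by
        congr 2 with x
        rw [trace_fderiv_eq_sum_fderiv_inner ((hV.differentiable one_ne_zero) x) b,
          Finset.mul_sum]
        exact Finset.sum_congr rfl fun k _ => mul_comm _ _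

theorem integral_fderiv_apply_withDensity_exp_neg {H f : E → ℝ} {φ : E → E}
    (hH : ContDiff ℝ 1 H) (hφ : ContDiff ℝ 1 φ) (hf : ContDiff ℝ 1 f) (hfc : HasCompactSupport f) :
    ∫ x, fderiv ℝ f x (φ x) ∂(μ.withDensity fun x => ENNReal.ofReal (exp (-H x)))
      = ∫ x, (fderiv ℝ H x (φ x) - LinearMap.trace ℝ E (fderiv ℝ φ x).toLinearMap) * f x
          ∂(μ.withDensity fun x => ENNReal.ofReal (exp (-H x))) := by
  have hdens : Measurable fun x => ENNReal.ofReal (exp (-H x)) := by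
    have := hH.continuous; fun_prop
  have hfin : ∀ᵐ x ∂μ, ENNReal.ofReal (exp (-H x)) < ⊤ := ae_of_all _ fun _ => ENNReal.ofReal_lt_top
  rw [integral_withDensity_eq_integral_toReal_smul hdens hfin,
    integral_withDensity_eq_integral_toReal_smul hdens hfin]
  simp only [ENNReal.toReal_ofReal (exp_nonneg _), smul_eq_mul]
  have hw : ContDiff ℝ 1 fun x => exp (-H x) := hH.neg.exp
  have hdiv x : LinearMap.trace ℝ E (fderiv ℝ (fun y => exp (-H y) • φ y) x).toLinearMap
      = exp (-H x) * (LinearMap.trace ℝ E (fderiv ℝ φ x).toLinearMap - fderiv ℝ H x (φ x)) := by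
    have hexp : HasFDerivAt (fun y => exp (-H y)) (exp (-H x) • -fderiv ℝ H x) x :=
      (hH.differentiable one_ne_zero x).hasFDerivAt.neg.exp
    rw [trace_fderiv_smul hexp.differentiableAt (hφ.differentiable one_ne_zero x), hexp.fderiv]
    simp only [smul_apply, neg_apply, smul_eq_mul]
    ring
  have := integral_fderiv_apply_eq_neg_integral_mul_trace μ (V := fun x => exp (-H x) • φ x)
    hf hfc (hw.smul hφ)
  simp only [map_smul, smul_eq_mul, hdiv] at this
  rw [this, ← integral_neg]
  congr 1 with x
  ring

end Divergence

section Jump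

variable {α ι : Type*} [MeasurableSpace α] [Fintype ι]

theorem sum_mul_integral_sub_of_eq_sum_smul {w : ι → ℝ} (hw : ∀ i, 0 ≤ w i)
    {μ : ι → Measure α} {ν : Measure α} [IsProbabilityMeasure ν]
    (hν : 0 < ∑ i, w i → ν = ∑ i, ENNReal.ofReal (w i / ∑ j, w j) • μ i)
    {f : α → ℝ} (hfμ : ∀ i, Integrable f (μ i)) (hfν : Integrable f ν) (c : ℝ) :
    (∑ i, w i) * ∫ y, (f y - c) ∂ν = ∑ i, w i * (∫ y, f y ∂(μ i) - c) := by
  rcases (Finset.sum_nonneg fun i _ => hw i).eq_or_lt with hzero | hpos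
  · have hw0 : ∀ i, w i = 0 := fun i =>
      (Finset.sum_eq_zero_iff_of_nonneg fun i _ => hw i).mp hzero.symm i (Finset.mem_univ i)
    simp [hw0]
  rw [integral_sub hfν (integrable_const c), integral_const, probReal_univ, one_smul, mul_sub,
    hν hpos, integral_finsetSum_measure fun i _ => (hfμ i).smul_measure ENNReal.ofReal_ne_top,
    Finset.mul_sum, Finset.sum_mul, ← Finset.sum_sub_distrib]
  refine Finset.sum_congr rfl fun i _ => ?_
  rw [integral_smul_measure, ENNReal.toReal_ofReal (div_nonneg (hw i) hpos.le), smul_eq_mul]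
  field_simp

theorem integrable_of_integrable_sum_of_nonneg {ρ : Measure α} {lam : ι → α → ℝ}
    (hlam_meas : ∀ i, Measurable (lam i)) (hlam_nonneg : ∀ i x, 0 ≤ lam i x)
    (hlam_int : Integrable (fun x => ∑ i, lam i x) ρ) (i : ι) : Integrable (lam i) ρ :=
  hlam_int.mono' (hlam_meas i).aestronglyMeasurable <| ae_of_all _ fun x => by
    rw [Real.norm_eq_abs, abs_of_nonneg (hlam_nonneg i x)]
    exact Finset.single_le_sum (fun j _ => hlam_nonneg j x) (Finset.mem_univ i)

variable {ρ : Measure α} {κ : Kernel α α} [IsMarkovKernel κ] {r f : α → ℝ} {C : ℝ}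

theorem integrable_mul_integral_kernel_s1 (hr : Integrable r ρ) (hf_meas : Measurable f)
    (hf : ∀ x, ‖f x‖ ≤ C) : Integrable (fun x => r x * ∫ y, f y ∂κ x) ρ :=
  hr.mul_bdd hf_meas.stronglyMeasurable.integral_kernel.aestronglyMeasurable <|
    ae_of_all _ fun x => by
      simpa using norm_integral_le_of_norm_le_const (μ := κ x) (ae_of_all _ hf)

theorem integrable_mul_integral_kernel_sub (hr : Integrable r ρ) (hf_meas : Measurable f)
    (hf : ∀ x, ‖f x‖ ≤ C) : Integrable (fun x => r x * (∫ y, f y ∂κ x - f x)) ρ := by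
  simpa only [mul_sub, Pi.sub_def] using (integrable_mul_integral_kernel_s1 hr hf_meas hf).sub
    (hr.mul_bdd hf_meas.aestronglyMeasurable (ae_of_all _ hf))

theorem integral_mul_integral_kernel_sub (hr : Integrable r ρ) (hf_meas : Measurable f)
    (hf : ∀ x, ‖f x‖ ≤ C) {S : α → α} (hS : MeasurePreserving S ρ ρ)
    (hκ : ∫ x, r x * ∫ y, f y ∂κ x ∂ρ = ∫ x, r (S x) * f x ∂ρ) :
    ∫ x, r x * (∫ y, f y ∂κ x - f x) ∂ρ = ∫ x, (r (S x) - r x) * f x ∂ρ := by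
  have hbdd : ∀ᵐ x ∂ρ, ‖f x‖ ≤ C := ae_of_all _ hf
  have hrf : Integrable (fun x => r x * f x) ρ := hr.mul_bdd hf_meas.aestronglyMeasurable hbdd
  have hrSf : Integrable (fun x => r (S x) * f x) ρ :=
    (hS.integrable_comp_of_integrable hr).mul_bdd hf_meas.aestronglyMeasurable hbdd
  simp only [mul_sub, sub_mul]
  rw [integral_sub (integrable_mul_integral_kernel_s1 hr hf_meas hf) hrf, integral_sub hrSf hrf, hκ]

theorem integral_sum_mul_integral_kernel_sub {lam : ι → α → ℝ} {κ : ι → Kernel α α}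
    [∀ i, IsMarkovKernel (κ i)] (hlam : ∀ i, Integrable (lam i) ρ) (hf_meas : Measurable f)
    (hf : ∀ x, ‖f x‖ ≤ C) {S : α → α} (hS : MeasurePreserving S ρ ρ)
    (hκ : ∀ i, ∫ x, lam i x * ∫ y, f y ∂(κ i x) ∂ρ = ∫ x, lam i (S x) * f x ∂ρ) :
    ∫ x, ∑ i, lam i x * (∫ y, f y ∂(κ i x) - f x) ∂ρ
      = ∫ x, (∑ i, (lam i (S x) - lam i x)) * f x ∂ρ := by
  have hint i : Integrable (fun x => (lam i (S x) - lam i x) * f x) ρ :=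
    ((hS.integrable_comp_of_integrable (hlam i)).sub (hlam i)).mul_bdd
      hf_meas.aestronglyMeasurable (ae_of_all _ hf)
  simp only [Finset.sum_mul]
  rw [integral_finsetSum _ fun i _ => integrable_mul_integral_kernel_sub (hlam i) hf_meas hf,
    integral_finsetSum _ fun i _ => hint i]
  exact Finset.sum_congr rfl fun i _ =>
    integral_mul_integral_kernel_sub (hlam i) hf_meas hf hS (hκ i)

end Jump

theorem local_pdmp_generator_integral_zero_general {n m : ℕ}
    (H : EuclideanSpace ℝ (Fin n) → ℝ) (hH : ContDiff ℝ 1 H)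
    (ρ : Measure (EuclideanSpace ℝ (Fin n)))
    (hρ : ρ = volume.withDensity (fun z => ENNReal.ofReal (Real.exp (-H z))))
    (φv : EuclideanSpace ℝ (Fin n) → EuclideanSpace ℝ (Fin n)) (hφ : ContDiff ℝ 1 φv)
    (lam : Fin m → EuclideanSpace ℝ (Fin n) → ℝ) (hlam_meas : ∀ i, Measurable (lam i))
    (hlam_nonneg : ∀ i z, 0 ≤ lam i z)
    (hlam_int : Integrable (fun z => ∑ i, lam i z) ρ)
    (Qi : Fin m → Kernel (EuclideanSpace ℝ (Fin n)) (EuclideanSpace ℝ (Fin n)))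
    [∀ i, IsMarkovKernel (Qi i)]
    (Q : Kernel (EuclideanSpace ℝ (Fin n)) (EuclideanSpace ℝ (Fin n))) [IsMarkovKernel Q]
    (hQmix : ∀ z, 0 < ∑ i, lam i z →
      (Q z : Measure (EuclideanSpace ℝ (Fin n)))
        = ∑ i, (ENNReal.ofReal (lam i z / ∑ j, lam j z)) • (Qi i z : Measure (EuclideanSpace ℝ (Fin n))))
    (S : EuclideanSpace ℝ (Fin n) → EuclideanSpace ℝ (Fin n)) (hS_meas : Measurable S)
    (hS_pres : Measure.map S ρ = ρ)
    (hrate : ∀ z, ∑ i, (lam i (S z) - lam i z) = pdmpDivergence φv z - ⟪gradient H z, φv z⟫)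
    (hQi : ∀ i, ∀ f : EuclideanSpace ℝ (Fin n) → ℝ, Measurable f → (∃ C, ∀ z, |f z| ≤ C) →
      ∫ z, lam i z * ∫ z', f z' ∂(Qi i z) ∂ρ = ∫ z', lam i (S z') * f z' ∂ρ) :
    ∀ f : EuclideanSpace ℝ (Fin n) → ℝ, ContDiff ℝ 1 f → HasCompactSupport f →
      ∫ z, (⟪φv z, gradient f z⟫ + (∑ i, lam i z) * ∫ z', (f z' - f z) ∂(Q z)) ∂ρ = 0 := by
  intro f hf hfc
  obtain ⟨C, hC⟩ := hfc.exists_bound_of_continuous hf.continuous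
  have hf_meas : Measurable f := hf.continuous.measurable
  have hf_int (μ : Measure (EuclideanSpace ℝ (Fin n))) [IsProbabilityMeasure μ] :
      Integrable f μ :=
    .of_bound hf_meas.aestronglyMeasurable C (ae_of_all _ hC)
  have hlam_i_int := integrable_of_integrable_sum_of_nonneg hlam_meas hlam_nonneg hlam_int
  have hjump z : (∑ i, lam i z) * ∫ z', (f z' - f z) ∂(Q z)
      = ∑ i, lam i z * (∫ z', f z' ∂(Qi i z) - f z) :=
    sum_mul_integral_sub_of_eq_sum_smul (hlam_nonneg · z) (hQmix z) (fun i => hf_int _) (hf_int _)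
      (f z)
  have hdrift z : ⟪φv z, gradient f z⟫ = fderiv ℝ f z (φv z) := by
    rw [real_inner_comm, inner_gradient_left]
  have : IsLocallyFiniteMeasure ρ := hρ ▸ .withDensity_ofReal hH.continuous.neg.rexp
  have hdrift_int : Integrable (fun z => fderiv ℝ f z (φv z)) ρ :=
    ((hf.continuous_fderiv one_ne_zero).clm_apply hφ.continuous).integrable_of_hasCompactSupport
      ((hfc.fderiv ℝ).mono fun z hz h0 => hz (by simp [h0]))
  have hjump_int := integrable_finsetSum Finset.univ fun i _ =>
    integrable_mul_integral_kernel_sub (κ := Qi i) (hlam_i_int i) hf_meas hC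
  simp only [hdrift, hjump]
  rw [integral_add hdrift_int hjump_int, integral_sum_mul_integral_kernel_sub hlam_i_int hf_meas hC
      ⟨hS_meas, hS_pres⟩ fun i => hQi i f hf_meas ⟨C, hC⟩,
    hρ, integral_fderiv_apply_withDensity_exp_neg volume hH hφ hf hfc, ← hρ,
    add_eq_zero_iff_eq_neg, ← integral_neg]
  congr 1 with z
  rw [hrate, inner_gradient_left]
  simp only [pdmpDivergence]
  ring

/-- sufficient conditions for invariance of a PDMP (local methods):
the event rate is `λ = Σᵢ λᵢ` and the event kernel is the mixture
`Q(z,·) = Σᵢ (λᵢ(z)/λ(z)) Qᵢ(z,·)` wherever `λ(z) > 0`. -/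
theorem local_pdmp_generator_integral_zero {n m : ℕ}
    (H : EuclideanSpace ℝ (Fin n) → ℝ) (hH : ContDiff ℝ 1 H)
    (ρ : Measure (EuclideanSpace ℝ (Fin n)))
    (hρ : ρ = volume.withDensity (fun z => ENNReal.ofReal (Real.exp (-H z))))
    (hprob : IsProbabilityMeasure ρ)
    (φv : EuclideanSpace ℝ (Fin n) → EuclideanSpace ℝ (Fin n)) (hφ : ContDiff ℝ 1 φv)
    (lam : Fin m → EuclideanSpace ℝ (Fin n) → ℝ) (hlam_meas : ∀ i, Measurable (lam i))
    (hlam_nonneg : ∀ i z, 0 ≤ lam i z)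
    (hlam_int : Integrable (fun z => ∑ i, lam i z) ρ)
    (Qi : Fin m → Kernel (EuclideanSpace ℝ (Fin n)) (EuclideanSpace ℝ (Fin n)))
    [∀ i, IsMarkovKernel (Qi i)]
    (Q : Kernel (EuclideanSpace ℝ (Fin n)) (EuclideanSpace ℝ (Fin n))) [IsMarkovKernel Q]
    (hQmix : ∀ z, 0 < ∑ i, lam i z →
      (Q z : Measure (EuclideanSpace ℝ (Fin n)))
        = ∑ i, (ENNReal.ofReal (lam i z / ∑ j, lam j z)) • (Qi i z : Measure (EuclideanSpace ℝ (Fin n))))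
    (S : EuclideanSpace ℝ (Fin n) → EuclideanSpace ℝ (Fin n)) (hS_meas : Measurable S)
    (hS_pres : Measure.map S ρ = ρ)
    (hrate : ∀ z, ∑ i, (lam i (S z) - lam i z) = pdmpDivergence φv z - ⟪gradient H z, φv z⟫)
    (hQi : ∀ i, ∀ f : EuclideanSpace ℝ (Fin n) → ℝ, Measurable f → (∃ C, ∀ z, |f z| ≤ C) →
      ∫ z, lam i z * ∫ z', f z' ∂(Qi i z) ∂ρ = ∫ z', lam i (S z') * f z' ∂ρ) :
    ∀ f : EuclideanSpace ℝ (Fin n) → ℝ, ContDiff ℝ 1 f → HasCompactSupport f →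
      ∫ z, (⟪φv z, gradient f z⟫ + (∑ i, lam i z) * ∫ z', (f z' - f z) ∂(Q z)) ∂ρ = 0 :=
  local_pdmp_generator_integral_zero_general H hH ρ hρ φv hφ lam hlam_meas hlam_nonneg hlam_int Qi Q
    hQmix S hS_meas hS_pres hrate hQi
end

section
/- Let ρ be the probability measure on ℝⁿ with strictly positive density ρ(z) = exp(−H(z)) with respect to Lebesgue measure, where H is measurable. Let Φ : ℝⁿ → ℝⁿ be a C¹ diffeomorphism with everywhere nonvanishing Jacobian determinant, let α : ℝⁿ → [0,1] be measurable, let Q be a Markov kernel on ℝⁿ, and let S : ℝⁿ → ℝⁿ be a measurable map whose pushforward of ρ equals ρ. Assume: (i) for all z, ρ(z) α(z) = ρ(Φ(z)) α(S(Φ(z))) |det DΦ(z)|; (ii) for every bounded measurable f, ∫∫ f(z′) (1 − α(z)) Q(z,dz′) ρ(dz) = ∫ f(z′) (1 − α(S(z′))) ρ(dz′). Then the discrete-time PDMP transition kernel K(z,·) = α(z) δ_{Φ(z)}(·) + (1 − α(z)) Q(z,·) admits ρ as an invariant distribution: ∫ K(z,A) ρ(dz) = ρ(A) for every measurable set A.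 -/
open MeasureTheory ProbabilityTheory
open scoped ENNReal

/-!
Integrate `K(·, A)` against `ρ` and treat the two moves separately. Condition (i) says that
`ρ α` is carried to `ρ (α ∘ S)` by `Φ` together with its Jacobian, so the change-of-variables
formula turns `∫ α · 1_A ∘ Φ dρ` into `∫ (α ∘ S) · 1_A dρ`; condition (ii) with `f = 1_A`
turns `∫ (1 - α) Q(·, A) dρ` into `∫ (1 - α ∘ S) · 1_A dρ`. The two weights add up to one,
leaving `ρ A`.
-/

theorem lintegral_withDensity_comp_eq_of_density_balance {E : Type*} [NormedAddCommGroup E]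
    [NormedSpace ℝ E] [FiniteDimensional ℝ E] [MeasurableSpace E] [BorelSpace E]
    (μ : Measure E) [μ.IsAddHaarMeasure] {Φ : E → E} {Φ' : E → E →L[ℝ] E}
    (hΦ : ∀ z, HasFDerivAt Φ (Φ' z) z) (hΦ_bij : Function.Bijective Φ)
    {w : E → ℝ≥0∞} (hw : Measurable w) (hw_fin : ∀ z, w z ≠ ∞) {a b : E → ℝ≥0∞}
    (hbal : ∀ z, w z * a z = w (Φ z) * b (Φ z) * ENNReal.ofReal |(Φ' z).det|)
    (g : E → ℝ≥0∞) :
    ∫⁻ z, a z * g (Φ z) ∂μ.withDensity w = ∫⁻ z, b z * g z ∂μ.withDensity w := by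
  have hcov := lintegral_image_eq_lintegral_abs_det_fderiv_mul μ MeasurableSet.univ
    (fun z _ => (hΦ z).hasFDerivWithinAt) hΦ_bij.injective.injOn fun z => w z * (b z * g z)
  rw [Set.image_univ, hΦ_bij.surjective.range_eq, Measure.restrict_univ] at hcov
  have hw_ae : ∀ᵐ z ∂μ, w z < ∞ := ae_of_all _ fun z => (hw_fin z).lt_top
  simp only [lintegral_withDensity_eq_lintegral_mul_non_measurable μ hw hw_ae, Pi.mul_apply,
    hcov]
  refine lintegral_congr fun z => ?_
  rw [← mul_assoc, hbal]
  ring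

theorem lintegral_ofReal_eq_of_integral_eq {X : Type*} [MeasurableSpace X] {μ : Measure X}
    {f g : X → ℝ} (hf : Integrable f μ) (hg : Integrable g μ) (hf0 : ∀ z, 0 ≤ f z)
    (hg0 : ∀ z, 0 ≤ g z) (h : ∫ z, f z ∂μ = ∫ z, g z ∂μ) :
    ∫⁻ z, ENNReal.ofReal (f z) ∂μ = ∫⁻ z, ENNReal.ofReal (g z) ∂μ := by
  rw [← ofReal_integral_eq_lintegral_ofReal hf (ae_of_all _ hf0),
    ← ofReal_integral_eq_lintegral_ofReal hg (ae_of_all _ hg0), h]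

theorem integrable_of_forall_mem_Icc {X : Type*} [MeasurableSpace X] {μ : Measure X}
    [IsFiniteMeasure μ] {f : X → ℝ} (hf : Measurable f) {C : ℝ}
    (hfC : ∀ z, f z ∈ Set.Icc 0 C) :
    Integrable f μ :=
  .of_bound hf.aestronglyMeasurable C <| ae_of_all _ fun z => by
    rw [Real.norm_of_nonneg (hfC z).1]; exact (hfC z).2

theorem lintegral_ofReal_mul_kernel_apply_eq {X : Type*} [MeasurableSpace X] {μ : Measure X}
    [IsFiniteMeasure μ] (κ : Kernel X X) [IsMarkovKernel κ] {p q : X → ℝ}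
    (hp : Measurable p) (hq : Measurable q) (hp01 : ∀ z, p z ∈ Set.Icc 0 1)
    (hq01 : ∀ z, q z ∈ Set.Icc 0 1) {A : Set X} (hA : MeasurableSet A)
    (h : ∫ z, p z * ∫ z', A.indicator 1 z' ∂κ z ∂μ = ∫ z, q z * A.indicator 1 z ∂μ) :
    ∫⁻ z, ENNReal.ofReal (p z) * κ z A ∂μ
      = ∫⁻ z, ENNReal.ofReal (q z) * A.indicator 1 z ∂μ := by
  simp only [integral_indicator_one hA] at h
  have hκ_mem : ∀ z, (κ z).real A ∈ Set.Icc 0 1 :=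
    fun z => ⟨measureReal_nonneg, measureReal_le_one⟩
  have hind_mem : ∀ z, A.indicator (1 : X → ℝ) z ∈ Set.Icc 0 1 := fun z => by
    by_cases hz : z ∈ A <;> simp [hz]
  have hL_mem := fun z => unitInterval.mul_mem (hp01 z) (hκ_mem z)
  have hR_mem := fun z => unitInterval.mul_mem (hq01 z) (hind_mem z)
  have hL_int : Integrable (fun z => p z * (κ z).real A) μ :=
    integrable_of_forall_mem_Icc (hp.mul (κ.measurable_coe hA).ennreal_toReal) hL_mem
  have hR_int : Integrable (fun z => q z * A.indicator 1 z) μ :=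
    integrable_of_forall_mem_Icc (hq.mul (measurable_one.indicator hA)) hR_mem
  have hlintegral := lintegral_ofReal_eq_of_integral_eq hL_int hR_int (fun z => (hL_mem z).1)
    (fun z => (hR_mem z).1) h
  convert hlintegral using 3 with z z
  · rw [ENNReal.ofReal_mul (hp01 z).1, measureReal_def,
      ENNReal.ofReal_toReal (measure_ne_top _ _)]
  · rw [ENNReal.ofReal_mul (hq01 z).1]
    by_cases hz : z ∈ A <;> simp [hz]

theorem lintegral_ofReal_mul_indicator_add_one_sub {X : Type*} [MeasurableSpace X]
    {μ : Measure X} {r : X → ℝ} (hr : Measurable r) (hr01 : ∀ z, r z ∈ Set.Icc 0 1)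
    {A : Set X} (hA : MeasurableSet A) :
    ∫⁻ z, ENNReal.ofReal (r z) * A.indicator 1 z ∂μ
      + ∫⁻ z, ENNReal.ofReal (1 - r z) * A.indicator 1 z ∂μ = μ A := by
  rw [← lintegral_add_left (by fun_prop (disch := exact hA)),
    ← lintegral_indicator_one hA]
  refine lintegral_congr fun z => ?_
  rw [← add_mul, ← ENNReal.ofReal_add (hr01 z).1 (sub_nonneg.2 (hr01 z).2), add_sub_cancel,
    ENNReal.ofReal_one, one_mul]

theorem discrete_time_pdmp_invariance_general {n : ℕ}
    (H : EuclideanSpace ℝ (Fin n) → ℝ) (hH_meas : Measurable H)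
    (ρ : Measure (EuclideanSpace ℝ (Fin n)))
    (hρ : ρ = volume.withDensity (fun z => ENNReal.ofReal (Real.exp (-H z))))
    (hprob : IsProbabilityMeasure ρ)
    (Φ : EuclideanSpace ℝ (Fin n) → EuclideanSpace ℝ (Fin n))
    (hΦ : ContDiff ℝ 1 Φ)
    (Φinv : EuclideanSpace ℝ (Fin n) → EuclideanSpace ℝ (Fin n))
    (hleft : Function.LeftInverse Φinv Φ) (hright : Function.RightInverse Φinv Φ)
    (α : EuclideanSpace ℝ (Fin n) → ℝ) (hα_meas : Measurable α)
    (hα_range : ∀ z, α z ∈ Set.Icc (0 : ℝ) 1)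
    (Q : Kernel (EuclideanSpace ℝ (Fin n)) (EuclideanSpace ℝ (Fin n))) [IsMarkovKernel Q]
    (S : EuclideanSpace ℝ (Fin n) → EuclideanSpace ℝ (Fin n)) (hS_meas : Measurable S)
    (haccept : ∀ z, Real.exp (-H z) * α z
      = Real.exp (-H (Φ z)) * α (S (Φ z)) * |LinearMap.det ((fderiv ℝ Φ z).toLinearMap)|)
    (hQ : ∀ f : EuclideanSpace ℝ (Fin n) → ℝ, Measurable f → (∃ C, ∀ z, |f z| ≤ C) →
      ∫ z, (1 - α z) * ∫ z', f z' ∂(Q z) ∂ρ = ∫ z', (1 - α (S z')) * f z' ∂ρ) :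
    ∀ A : Set (EuclideanSpace ℝ (Fin n)), MeasurableSet A →
      ∫⁻ z, (ENNReal.ofReal (α z) * Measure.dirac (Φ z) A
        + ENNReal.ofReal (1 - α z) * Q z A) ∂ρ = ρ A := by
  intro A hA
  have hreject_range : ∀ z, 1 - α z ∈ Set.Icc 0 1 :=
    fun z => ⟨sub_nonneg.2 (hα_range z).2, sub_le_self _ (hα_range z).1⟩
  have hdeterministic : ∫⁻ z, ENNReal.ofReal (α z) * A.indicator 1 (Φ z) ∂ρ
      = ∫⁻ z, ENNReal.ofReal (α (S z)) * A.indicator 1 z ∂ρ := by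
    have hdensity_meas : Measurable fun z => ENNReal.ofReal (Real.exp (-H z)) := by fun_prop
    rw [hρ]
    refine lintegral_withDensity_comp_eq_of_density_balance volume
      (fun z => (hΦ.differentiable one_ne_zero z).hasFDerivAt)
      ⟨hleft.injective, hright.surjective⟩
      hdensity_meas (fun _ => ENNReal.ofReal_ne_top) (fun z => ?_) _
    rw [← ENNReal.ofReal_mul (Real.exp_nonneg _), haccept z,
      ENNReal.ofReal_mul (mul_nonneg (Real.exp_nonneg _) (hα_range _).1),
      ENNReal.ofReal_mul (Real.exp_nonneg _)]
  have hjump : ∫⁻ z, ENNReal.ofReal (1 - α z) * Q z A ∂ρ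
      = ∫⁻ z, ENNReal.ofReal (1 - α (S z)) * A.indicator 1 z ∂ρ :=
    lintegral_ofReal_mul_kernel_apply_eq Q (measurable_const.sub hα_meas)
      (measurable_const.sub (hα_meas.comp hS_meas)) hreject_range (fun z => hreject_range (S z)) hA
      (hQ _ (measurable_one.indicator hA) ⟨1, fun z => by by_cases hz : z ∈ A <;> simp [hz]⟩)
  simp only [Measure.dirac_apply' _ hA]
  have hΦ_meas : Measurable Φ := hΦ.continuous.measurable
  rw [lintegral_add_left (by fun_prop (disch := exact hA)), hdeterministic, hjump]
  exact lintegral_ofReal_mul_indicator_add_one_sub (hα_meas.comp hS_meas)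
    (fun z => hα_range (S z)) hA

/-- sufficient conditions for invariance of a discrete-time PDMP with kernel
`K(z,·) = α(z) δ_{Φ(z)}(·) + (1 − α(z)) Q(z,·)` targeting `ρ(z) = exp(−H(z))`. -/
theorem discrete_time_pdmp_invariance {n : ℕ}
    (H : EuclideanSpace ℝ (Fin n) → ℝ) (hH_meas : Measurable H)
    (ρ : Measure (EuclideanSpace ℝ (Fin n)))
    (hρ : ρ = volume.withDensity (fun z => ENNReal.ofReal (Real.exp (-H z))))
    (hprob : IsProbabilityMeasure ρ)
    (Φ : EuclideanSpace ℝ (Fin n) → EuclideanSpace ℝ (Fin n))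
    (hΦ : ContDiff ℝ 1 Φ)
    (Φinv : EuclideanSpace ℝ (Fin n) → EuclideanSpace ℝ (Fin n))
    (hΦinv : ContDiff ℝ 1 Φinv)
    (hleft : Function.LeftInverse Φinv Φ) (hright : Function.RightInverse Φinv Φ)
    (hjac : ∀ z, LinearMap.det ((fderiv ℝ Φ z).toLinearMap) ≠ 0)
    (α : EuclideanSpace ℝ (Fin n) → ℝ) (hα_meas : Measurable α)
    (hα_range : ∀ z, α z ∈ Set.Icc (0 : ℝ) 1)
    (Q : Kernel (EuclideanSpace ℝ (Fin n)) (EuclideanSpace ℝ (Fin n))) [IsMarkovKernel Q]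
    (S : EuclideanSpace ℝ (Fin n) → EuclideanSpace ℝ (Fin n)) (hS_meas : Measurable S)
    (hS_pres : Measure.map S ρ = ρ)
    (haccept : ∀ z, Real.exp (-H z) * α z
      = Real.exp (-H (Φ z)) * α (S (Φ z)) * |LinearMap.det ((fderiv ℝ Φ z).toLinearMap)|)
    (hQ : ∀ f : EuclideanSpace ℝ (Fin n) → ℝ, Measurable f → (∃ C, ∀ z, |f z| ≤ C) →
      ∫ z, (1 - α z) * ∫ z', f z' ∂(Q z) ∂ρ = ∫ z', (1 - α (S z')) * f z' ∂ρ) :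
    ∀ A : Set (EuclideanSpace ℝ (Fin n)), MeasurableSet A →
      ∫⁻ z, (ENNReal.ofReal (α z) * Measure.dirac (Φ z) A
        + ENNReal.ofReal (1 - α z) * Q z A) ∂ρ = ρ A :=
  discrete_time_pdmp_invariance_general H hH_meas ρ hρ hprob Φ hΦ Φinv hleft hright α hα_meas
    hα_range Q S hS_meas haccept hQ
end

section
/- Let ν be a strictly positive probability density on ℝⁿ with respect to Lebesgue measure, and let S : ℝⁿ → ℝⁿ be a C¹ involution (S ∘ S = id) with |det DS(z)| = 1 for all z and ν(S(z)) = ν(z) for all z. Let Ψ : ℝⁿ → ℝⁿ be a C¹ diffeomorphism satisfying Ψ⁻¹ = S ∘ Ψ ∘ S, and define the acceptance probability β(z) = min{1, ν(Ψ(z)) |det DΨ(z)| / ν(z)}. Then the kernel T(z,·) = β(z) δ_{Ψ(z)}(·) + (1 − β(z)) δ_{S(z)}(·) leaves ν invariant: for every measurable set A, ∫ T(z,A) ν(z) dz = ∫_A ν(z) dz. -/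
/-!
Write `a z = β z * ν z = min (ν z) (ν (Ψ z) * |det DΨ z|)` for the accepted mass at `z`. Changing
variables along `Ψ⁻¹ = S ∘ Ψ ∘ S`, whose Jacobian at `w` is `|det DΨ (S w)|` because `S` preserves
volume, turns the accepted mass arriving in `A` into `∫_A a ∘ S`, since multiplying by the
Jacobian swaps the two arguments of the min: `a (Ψ⁻¹ w) * |det DΨ⁻¹ w| = a (S w)`. The rejected
mass arriving in `A` is, after the substitution `z = S w`, `∫_A (ν ∘ S - a ∘ S)`, and the two
add up to `∫_A ν ∘ S = ∫_A ν`.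
-/

open MeasureTheory

open scoped ENNReal

open Function

section Jacobian

variable {E : Type*} [NormedAddCommGroup E] [NormedSpace ℝ E]

noncomputable def absDetFDeriv (f : E → E) (z : E) : ℝ :=
  |LinearMap.det (fderiv ℝ f z).toLinearMap|

theorem absDetFDeriv_nonneg (f : E → E) (z : E) : 0 ≤ absDetFDeriv f z := abs_nonneg _

theorem absDetFDeriv_comp {f g : E → E} {z : E} (hf : DifferentiableAt ℝ f (g z))
    (hg : DifferentiableAt ℝ g z) :
    absDetFDeriv (f ∘ g) z = absDetFDeriv f (g z) * absDetFDeriv g z := by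
  rw [absDetFDeriv, fderiv_comp z hf hg]
  exact (congrArg abs (LinearMap.det_comp _ _)).trans (abs_mul _ _)

theorem absDetFDeriv_mul_absDetFDeriv_of_rightInverse {f g : E → E} (hf : Differentiable ℝ f)
    (hg : Differentiable ℝ g) (hfg : RightInverse g f) (w : E) :
    absDetFDeriv f (g w) * absDetFDeriv g w = 1 := by
  rw [← absDetFDeriv_comp (hf _) (hg w), hfg.comp_eq_id]
  simp [absDetFDeriv, fderiv_id]

variable [FiniteDimensional ℝ E] [MeasurableSpace E] [BorelSpace E]

theorem measurable_absDetFDeriv (f : E → E) : Measurable (absDetFDeriv f) :=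
  continuous_abs.measurable.comp
    (ContinuousLinearMap.continuous_det.measurable.comp (measurable_fderiv ℝ f))

variable (μ : Measure E) [μ.IsAddHaarMeasure]

theorem lintegral_absDetFDeriv_mul_comp {f : E → E} (hf : Differentiable ℝ f)
    (hf_bij : Bijective f) (g : E → ℝ≥0∞) :
    ∫⁻ z, ENNReal.ofReal (absDetFDeriv f z) * g (f z) ∂μ = ∫⁻ w, g w ∂μ := by
  have h := lintegral_image_eq_lintegral_abs_det_fderiv_mul μ MeasurableSet.univ
    (fun z _ => (hf z).hasFDerivAt.hasFDerivWithinAt) hf_bij.injective.injOn g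
  rwa [Set.image_univ, hf_bij.surjective.range_eq, setLIntegral_univ, setLIntegral_univ,
    eq_comm] at h

theorem measurePreserving_of_absDetFDeriv_eq_one {f : E → E} (hf : Differentiable ℝ f)
    (hf_bij : Bijective f) (hf_jac : ∀ z, absDetFDeriv f z = 1) : MeasurePreserving f μ μ := by
  refine ⟨hf.continuous.measurable, Measure.ext fun s hs => ?_⟩
  have h := lintegral_absDetFDeriv_mul_comp μ hf hf_bij (s.indicator 1)
  simp only [hf_jac, ENNReal.ofReal_one, one_mul, ← Set.indicator_comp_right, Pi.one_comp] at h
  rwa [lintegral_indicator_one hs, lintegral_indicator_one (hf.continuous.measurable hs),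
    ← Measure.map_apply hf.continuous.measurable hs] at h

end Jacobian

section Acceptance

variable {α : Type*} [MeasurableSpace α] {μ : Measure α} {Ψ S : α → α} {a ν g : α → ℝ≥0∞}

theorem lintegral_accept_add_reject_eq (hS : MeasurePreserving S μ μ) (hS_invol : Involutive S)
    (hSν : ∀ z, ν (S z) = ν z) (ha_le : ∀ z, a z ≤ ν z) (hg : Measurable g) (ha : Measurable a)
    (hΨ : Measurable Ψ) (h_balance : ∫⁻ z, g (Ψ z) * a z ∂μ = ∫⁻ w, g w * a (S w) ∂μ) :
    ∫⁻ z, g (Ψ z) * a z + g (S z) * (ν z - a z) ∂μ = ∫⁻ w, g w * ν w ∂μ := by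
  have h_reject : ∫⁻ z, g (S z) * (ν z - a z) ∂μ = ∫⁻ w, g w * (ν w - a (S w)) ∂μ := by
    rw [← hS.lintegral_comp_emb
      (MeasurableEquiv.ofInvolutive S hS_invol hS.measurable).measurableEmbedding]
    simp only [hS_invol _, hSν]
  rw [lintegral_add_left (f := fun z => g (Ψ z) * a z) ((hg.comp hΨ).mul ha), h_balance,
    h_reject, ← lintegral_add_left (f := fun w => g w * a (S w)) (hg.mul (ha.comp hS.measurable))]
  refine lintegral_congr fun w => ?_
  rw [← mul_add, add_tsub_cancel_of_le (hSν w ▸ ha_le (S w))]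

end Acceptance

section Flux

variable {E : Type*} [NormedAddCommGroup E] [NormedSpace ℝ E]

noncomputable def acceptedFlux (ν : E → ℝ) (Ψ : E → E) (z : E) : ℝ :=
  min (ν z) (ν (Ψ z) * absDetFDeriv Ψ z)

variable {ν : E → ℝ} {Ψ S : E → E}

theorem acceptedFlux_nonneg (hν : ∀ z, 0 ≤ ν z) (z : E) : 0 ≤ acceptedFlux ν Ψ z :=
  le_min (hν z) (mul_nonneg (hν _) (absDetFDeriv_nonneg Ψ z))

theorem acceptedFlux_le (z : E) : acceptedFlux ν Ψ z ≤ ν z := min_le_left _ _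

theorem min_one_div_mul_eq_acceptedFlux {z : E} (hz : 0 < ν z) :
    min 1 (ν (Ψ z) * absDetFDeriv Ψ z / ν z) * ν z = acceptedFlux ν Ψ z := by
  rw [min_mul_of_nonneg _ _ hz.le, one_mul, div_mul_cancel₀ _ hz.ne', acceptedFlux]

theorem acceptedFlux_conj_mul_absDetFDeriv (hS : Differentiable ℝ S)
    (hS_jac : ∀ z, absDetFDeriv S z = 1) (hSν : ∀ z, ν (S z) = ν z) (hΨ : Differentiable ℝ Ψ)
    (hΨ_inv : RightInverse (S ∘ Ψ ∘ S) Ψ) (w : E) :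
    acceptedFlux ν Ψ (S (Ψ (S w))) * absDetFDeriv (S ∘ Ψ ∘ S) w = acceptedFlux ν Ψ (S w) := by
  have h_conj : absDetFDeriv (S ∘ Ψ ∘ S) w = absDetFDeriv Ψ (S w) := by
    rw [absDetFDeriv_comp (hS _) ((hΨ _).comp w (hS w)), absDetFDeriv_comp (hΨ _) (hS w), hS_jac,
      hS_jac, one_mul, mul_one]
  have h_inv := absDetFDeriv_mul_absDetFDeriv_of_rightInverse hΨ (hS.comp (hΨ.comp hS)) hΨ_inv w
  simp only [comp_apply] at h_inv
  rw [acceptedFlux, acceptedFlux, min_mul_of_nonneg _ _ (absDetFDeriv_nonneg _ _), mul_assoc,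
    h_inv, mul_one, show Ψ (S (Ψ (S w))) = w from hΨ_inv w, hSν, hSν, h_conj, min_comm]

variable [FiniteDimensional ℝ E] [MeasurableSpace E] [BorelSpace E]

theorem measurable_acceptedFlux (hν : Measurable ν) (hΨ : Measurable Ψ) :
    Measurable (acceptedFlux ν Ψ) :=
  hν.min ((hν.comp hΨ).mul (measurable_absDetFDeriv Ψ))

theorem lintegral_comp_mul_acceptedFlux (μ : Measure E) [μ.IsAddHaarMeasure]
    (hS : Differentiable ℝ S) (hS_jac : ∀ z, absDetFDeriv S z = 1) (hSν : ∀ z, ν (S z) = ν z)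
    (hΨ : Differentiable ℝ Ψ) (hΨ_left : LeftInverse (S ∘ Ψ ∘ S) Ψ)
    (hΨ_right : RightInverse (S ∘ Ψ ∘ S) Ψ) (g : E → ℝ≥0∞) :
    ∫⁻ z, g (Ψ z) * ENNReal.ofReal (acceptedFlux ν Ψ z) ∂μ
      = ∫⁻ w, g w * ENNReal.ofReal (acceptedFlux ν Ψ (S w)) ∂μ := by
  rw [← lintegral_absDetFDeriv_mul_comp μ (hS.comp (hΨ.comp hS))
    ⟨hΨ_right.injective, hΨ_left.surjective⟩]
  refine lintegral_congr fun w => ?_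
  rw [← acceptedFlux_conj_mul_absDetFDeriv hS hS_jac hSν hΨ hΨ_right w,
    ENNReal.ofReal_mul' (absDetFDeriv_nonneg _ _)]
  simp only [comp_apply]
  rw [show Ψ (S (Ψ (S w))) = w from hΨ_right w]
  ring

end Flux

theorem gmh_deterministic_proposal_invariance_general {n : ℕ}
    (ν : EuclideanSpace ℝ (Fin n) → ℝ) (hν_meas : Measurable ν)
    (hν_pos : ∀ z, 0 < ν z)
    (S : EuclideanSpace ℝ (Fin n) → EuclideanSpace ℝ (Fin n))
    (hS : ContDiff ℝ 1 S) (hS_invol : S ∘ S = id)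
    (hS_jac : ∀ z, |LinearMap.det ((fderiv ℝ S z).toLinearMap)| = 1)
    (hS_ν : ∀ z, ν (S z) = ν z)
    (Ψ : EuclideanSpace ℝ (Fin n) → EuclideanSpace ℝ (Fin n))
    (hΨ : ContDiff ℝ 1 Ψ)
    (Ψinv : EuclideanSpace ℝ (Fin n) → EuclideanSpace ℝ (Fin n))
    (hleft : Function.LeftInverse Ψinv Ψ) (hright : Function.RightInverse Ψinv Ψ)
    (hΨinv_eq : Ψinv = S ∘ Ψ ∘ S)
    (β : EuclideanSpace ℝ (Fin n) → ℝ)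
    (hβ : ∀ z, β z
      = min 1 (ν (Ψ z) * |LinearMap.det ((fderiv ℝ Ψ z).toLinearMap)| / ν z)) :
    ∀ A : Set (EuclideanSpace ℝ (Fin n)), MeasurableSet A →
      ∫⁻ z, (ENNReal.ofReal (β z) * Measure.dirac (Ψ z) A
          + ENNReal.ofReal (1 - β z) * Measure.dirac (S z) A)
          * ENNReal.ofReal (ν z)
        = ∫⁻ z in A, ENNReal.ofReal (ν z) := by
  intro A hA
  subst hΨinv_eq
  have hS_diff := hS.differentiable one_ne_zero
  have hΨ_diff := hΨ.differentiable one_ne_zero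
  have hS_involutive : Involutive S := congrFun hS_invol
  have hν_nonneg z : 0 ≤ ν z := (hν_pos z).le
  have hβν z : β z * ν z = acceptedFlux ν Ψ z := hβ z ▸ min_one_div_mul_eq_acceptedFlux (hν_pos z)
  have h_split z : (ENNReal.ofReal (β z) * Measure.dirac (Ψ z) A
        + ENNReal.ofReal (1 - β z) * Measure.dirac (S z) A) * ENNReal.ofReal (ν z)
      = A.indicator 1 (Ψ z) * ENNReal.ofReal (acceptedFlux ν Ψ z)
        + A.indicator 1 (S z) * (ENNReal.ofReal (ν z) - ENNReal.ofReal (acceptedFlux ν Ψ z)) := by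
    rw [Measure.dirac_apply' _ hA, Measure.dirac_apply' _ hA, ← hβν,
      ← ENNReal.ofReal_sub _ (hβν z ▸ acceptedFlux_nonneg hν_nonneg z),
      show ν z - β z * ν z = (1 - β z) * ν z by ring, ENNReal.ofReal_mul' (hν_nonneg z),
      ENNReal.ofReal_mul' (hν_nonneg z)]
    ring
  rw [lintegral_congr h_split, lintegral_accept_add_reject_eq
      (measurePreserving_of_absDetFDeriv_eq_one volume hS_diff hS_involutive.bijective hS_jac)
      hS_involutive (by simp [hS_ν]) (fun z => ENNReal.ofReal_le_ofReal (acceptedFlux_le z))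
      (measurable_one.indicator hA)
      (measurable_acceptedFlux hν_meas hΨ_diff.continuous.measurable).ennreal_ofReal
      hΨ_diff.continuous.measurable
      (lintegral_comp_mul_acceptedFlux volume hS_diff hS_jac hS_ν hΨ_diff hleft hright _),
    ← lintegral_indicator hA]
  congr 1 with w
  by_cases hw : w ∈ A <;> simp [hw]

/-- the generalized Metropolis–Hastings kernel with deterministic proposal `Ψ`
satisfying `Ψ⁻¹ = S ∘ Ψ ∘ S`, acceptance probability
`β(z) = min{1, ν(Ψ z) |det DΨ(z)| / ν(z)}` and rejection move `z ↦ S(z)` leaves `ν`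
invariant. -/
theorem gmh_deterministic_proposal_invariance {n : ℕ}
    (ν : EuclideanSpace ℝ (Fin n) → ℝ) (hν_meas : Measurable ν)
    (hν_pos : ∀ z, 0 < ν z) (hν_prob : ∫ z, ν z = 1)
    (S : EuclideanSpace ℝ (Fin n) → EuclideanSpace ℝ (Fin n))
    (hS : ContDiff ℝ 1 S) (hS_invol : S ∘ S = id)
    (hS_jac : ∀ z, |LinearMap.det ((fderiv ℝ S z).toLinearMap)| = 1)
    (hS_ν : ∀ z, ν (S z) = ν z)
    (Ψ : EuclideanSpace ℝ (Fin n) → EuclideanSpace ℝ (Fin n))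
    (hΨ : ContDiff ℝ 1 Ψ)
    (Ψinv : EuclideanSpace ℝ (Fin n) → EuclideanSpace ℝ (Fin n))
    (hΨinv : ContDiff ℝ 1 Ψinv)
    (hleft : Function.LeftInverse Ψinv Ψ) (hright : Function.RightInverse Ψinv Ψ)
    (hΨinv_eq : Ψinv = S ∘ Ψ ∘ S)
    (β : EuclideanSpace ℝ (Fin n) → ℝ)
    (hβ : ∀ z, β z
      = min 1 (ν (Ψ z) * |LinearMap.det ((fderiv ℝ Ψ z).toLinearMap)| / ν z)) :
    ∀ A : Set (EuclideanSpace ℝ (Fin n)), MeasurableSet A →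
      ∫⁻ z, (ENNReal.ofReal (β z) * Measure.dirac (Ψ z) A
          + ENNReal.ofReal (1 - β z) * Measure.dirac (S z) A)
          * ENNReal.ofReal (ν z)
        = ∫⁻ z in A, ENNReal.ofReal (ν z) :=
  gmh_deterministic_proposal_invariance_general ν hν_meas hν_pos S hS hS_invol hS_jac hS_ν Ψ hΨ Ψinv
    hleft hright hΨinv_eq β hβ
end

section
/- Let π be a probability density on ℝᵈ, let ψ be a probability measure on ℝᵈ invariant under v ↦ −v, let ρ = π ⊗ ψ on ℝᵈ × ℝᵈ, let λ : ℝᵈ × ℝᵈ → [0,∞) be measurable with ∫ λ dρ < ∞, and let (Q_x)_{x∈ℝᵈ} be a jointly measurable family of Markov kernels on ℝᵈ satisfying, for every x and every measurable set B ⊆ ℝᵈ, ∫ λ(x,v) Q_x(v,B) ψ(dv) = ∫_B λ(x,−v′) ψ(dv′). Define the event kernel Q((x,v), ·) = δ_x ⊗ Q_x(v,·) and S(x,v) = (x,−v). Then for every bounded measurable f, ∫∫ f(z′) λ(z) Q(z,dz′) ρ(dz) = ∫ f(z′) λ(S(z′)) ρ(dz′); that is, Q satisfies the event-kernel invariance condition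 ∫ ρ(dz) λ(z) Q(z,dz′) = ρ(S⁻¹(dz′)) λ(S(z′)) for randomized bounces. -/
/-!
Both sides of the invariance identity are integrals of `f` against finite measures on
`X × V`: the push-forward of `λ · ρ` under the event kernel, and `(λ ∘ S) · ρ`. Finite measures
agreeing on the π-system of rectangles `A ×ˢ B` are equal, and on a rectangle the Dirac factor of
the event kernel only restricts the position to `A`, so by Tonelli the two masses are
`∫_A ∫ λ(x,v) Q_x(v,B) ψ(dv) dx` and `∫_A ∫_B λ(x,−v) ψ(dv) dx`, equal by the hypothesis on `Q_x`.
-/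

open MeasureTheory ProbabilityTheory
open scoped ENNReal

section Integrals

variable {Z W : Type*} [MeasurableSpace Z] [MeasurableSpace W]

lemma integral_withDensity_ofReal_eq_integral_mul {μ : Measure Z} {g : Z → ℝ}
    (hg : Measurable g) (hg_nonneg : ∀ z, 0 ≤ g z) (f : Z → ℝ) :
    ∫ z, f z ∂μ.withDensity (fun z => ENNReal.ofReal (g z)) = ∫ z, g z * f z ∂μ := by
  rw [integral_withDensity_eq_integral_toReal_smul hg.ennreal_ofReal
    (ae_of_all _ fun _ => ENNReal.ofReal_lt_top)]
  simp only [ENNReal.toReal_ofReal (hg_nonneg _), smul_eq_mul]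

lemma integral_integral_eq_integral_comp {μ : Measure Z} [SFinite μ] {κ : Kernel Z W}
    [IsSFiniteKernel κ] {f : W → ℝ} (hf : Integrable f (κ ∘ₘ μ)) :
    ∫ z, ∫ w, f w ∂κ z ∂μ = ∫ w, f w ∂(κ ∘ₘ μ) := by
  rw [← Measure.integral_compProd ((Measure.integrable_compProd_snd_iff hf.1).2 hf),
    ← Measure.snd_compProd, Measure.snd, integral_map measurable_snd.aemeasurable
    (by rw [← Measure.snd, Measure.snd_compProd]; exact hf.1)]

end Integrals

variable {X V : Type*} [MeasurableSpace X] [MeasurableSpace V]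

noncomputable def eventKernel (Q : Kernel (X × V) V) [IsSFiniteKernel Q] :
    Kernel (X × V) (X × V) :=
  Kernel.deterministic Prod.fst measurable_fst ×ₖ Q

section EventKernel

variable (Q : Kernel (X × V) V) [IsSFiniteKernel Q]

instance [IsFiniteKernel Q] : IsFiniteKernel (eventKernel Q) := by
  unfold eventKernel; infer_instance

lemma eventKernel_apply (z : X × V) :
    eventKernel Q z = (Measure.dirac z.1).prod (Q z) := by
  rw [eventKernel, Kernel.prod_apply, Kernel.deterministic_apply]

lemma eventKernel_apply_prod {A : Set X} {B : Set V} (hA : MeasurableSet A) (z : X × V) :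
    eventKernel Q z (A ×ˢ B) = A.indicator 1 z.1 * Q z B := by
  rw [eventKernel_apply, Measure.prod_prod, Measure.dirac_apply' _ hA]

end EventKernel

section Invariance

variable [Neg V] [MeasurableNeg V] {μ : Measure X} [SFinite μ] {ψ : Measure V} [SFinite ψ]
  {Q : Kernel (X × V) V} [IsSFiniteKernel Q] {ℓ : X × V → ℝ≥0∞}

lemma eventKernel_comp_withDensity_apply_prod (hℓ : Measurable ℓ)
    (hQ : ∀ x B, MeasurableSet B → ∫⁻ v, ℓ (x, v) * Q (x, v) B ∂ψ = ∫⁻ v in B, ℓ (x, -v) ∂ψ)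
    {A : Set X} {B : Set V} (hA : MeasurableSet A) (hB : MeasurableSet B) :
    (eventKernel Q ∘ₘ (μ.prod ψ).withDensity ℓ) (A ×ˢ B)
      = (μ.prod ψ).withDensity (fun z => ℓ (z.1, -z.2)) (A ×ˢ B) := by
  calc (eventKernel Q ∘ₘ (μ.prod ψ).withDensity ℓ) (A ×ˢ B)
      = ∫⁻ z, ℓ z * (A.indicator 1 z.1 * Q z B) ∂μ.prod ψ := by
        rw [Measure.bind_apply (hA.prod hB) (Kernel.aemeasurable _),
          lintegral_withDensity_eq_lintegral_mul _ hℓ (Kernel.measurable_coe _ (hA.prod hB))]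
        simp only [Pi.mul_apply, eventKernel_apply_prod Q hA]
    _ = ∫⁻ x, A.indicator (fun x => ∫⁻ v, ℓ (x, v) * Q (x, v) B ∂ψ) x ∂μ := by
        have hmeas : Measurable fun z : X × V => ℓ z * (A.indicator 1 z.1 * Q z B) :=
          hℓ.mul (((measurable_one.indicator hA).comp measurable_fst).mul (Q.measurable_coe hB))
        rw [lintegral_prod _ hmeas.aemeasurable]
        refine lintegral_congr fun x => ?_
        by_cases hx : x ∈ A <;> simp [hx]
    _ = ∫⁻ x in A, ∫⁻ v in B, ℓ (x, -v) ∂ψ ∂μ := by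
        rw [lintegral_indicator hA]
        exact setLIntegral_congr_fun hA fun x _ => hQ x B hB
    _ = (μ.prod ψ).withDensity (fun z => ℓ (z.1, -z.2)) (A ×ˢ B) := by
        rw [withDensity_apply _ (hA.prod hB), setLIntegral_prod _ (by fun_prop)]

theorem eventKernel_comp_withDensity [IsFiniteKernel Q]
    [IsFiniteMeasure ((μ.prod ψ).withDensity ℓ)] (hℓ : Measurable ℓ)
    (hQ : ∀ x B, MeasurableSet B → ∫⁻ v, ℓ (x, v) * Q (x, v) B ∂ψ = ∫⁻ v in B, ℓ (x, -v) ∂ψ) :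
    eventKernel Q ∘ₘ (μ.prod ψ).withDensity ℓ
      = (μ.prod ψ).withDensity (fun z => ℓ (z.1, -z.2)) := by
  refine ext_of_generate_finite _ generateFrom_prod.symm isPiSystem_prod ?_ ?_
  · rintro _ ⟨A, hA, B, hB, rfl⟩
    exact eventKernel_comp_withDensity_apply_prod hℓ hQ hA hB
  · rw [← Set.univ_prod_univ]
    exact eventKernel_comp_withDensity_apply_prod hℓ hQ .univ .univ

end Invariance

theorem randomized_bounce_event_kernel_invariance_general {d : ℕ}
    (π : EuclideanSpace ℝ (Fin d) → ℝ)
    (ψ : Measure (EuclideanSpace ℝ (Fin d))) [IsProbabilityMeasure ψ]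
    (ρ : Measure (EuclideanSpace ℝ (Fin d) × EuclideanSpace ℝ (Fin d)))
    (hρ : ρ = (volume.withDensity (fun x => ENNReal.ofReal (π x))).prod ψ)
    (lam : EuclideanSpace ℝ (Fin d) × EuclideanSpace ℝ (Fin d) → ℝ)
    (hlam_meas : Measurable lam) (hlam_nonneg : ∀ z, 0 ≤ lam z)
    (hlam_int : Integrable lam ρ)
    (Qx : Kernel (EuclideanSpace ℝ (Fin d) × EuclideanSpace ℝ (Fin d))
      (EuclideanSpace ℝ (Fin d)))
    [IsMarkovKernel Qx]
    (hQx : ∀ x : EuclideanSpace ℝ (Fin d), ∀ B : Set (EuclideanSpace ℝ (Fin d)),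
      MeasurableSet B →
      ∫⁻ v, ENNReal.ofReal (lam (x, v)) * Qx (x, v) B ∂ψ
        = ∫⁻ v' in B, ENNReal.ofReal (lam (x, -v')) ∂ψ) :
    ∀ f : EuclideanSpace ℝ (Fin d) × EuclideanSpace ℝ (Fin d) → ℝ,
      Measurable f → (∃ C, ∀ z, |f z| ≤ C) →
      ∫ z, lam z * ∫ z', f z' ∂((Measure.dirac z.1).prod (Qx z)) ∂ρ
        = ∫ z', lam (z'.1, -z'.2) * f z' ∂ρ := by
  rintro f hf ⟨C, hC⟩
  subst hρ
  set μπ := volume.withDensity fun x => ENNReal.ofReal (π x)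
  have := isFiniteMeasure_withDensity_ofReal hlam_int.2
  have hinv := eventKernel_comp_withDensity (μ := μπ) hlam_meas.ennreal_ofReal hQx
  have hf_int : Integrable f
      (eventKernel Qx ∘ₘ (μπ.prod ψ).withDensity fun z => ENNReal.ofReal (lam z)) :=
    .of_bound hf.aestronglyMeasurable C (ae_of_all _ hC)
  calc ∫ z, lam z * ∫ z', f z' ∂((Measure.dirac z.1).prod (Qx z)) ∂_
      = ∫ z, ∫ z', f z' ∂eventKernel Qx z ∂_ := by
        simp only [integral_withDensity_ofReal_eq_integral_mul hlam_meas hlam_nonneg,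
          eventKernel_apply]
    _ = ∫ z', f z' ∂_ := integral_integral_eq_integral_comp hf_int
    _ = ∫ z', lam (z'.1, -z'.2) * f z' ∂_ := by
        rw [hinv]
        exact integral_withDensity_ofReal_eq_integral_mul (by fun_prop) (fun _ => hlam_nonneg _) f

/-- for randomized bounces, if each velocity kernel `Q_x` satisfies
`∫ λ(x,v) Q_x(v,B) ψ(dv) = ∫_B λ(x,−v′) ψ(dv′)`, then the event kernel
`Q((x,v),·) = δ_x ⊗ Q_x(v,·)` satisfies the event-kernel invariance condition
`∫ ρ(dz) λ(z) Q(z,dz′) = ρ(S⁻¹(dz′)) λ(S(z′))` for `ρ = π ⊗ ψ` and `S(x,v) = (x,−v)`. -/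
theorem randomized_bounce_event_kernel_invariance {d : ℕ}
    (π : EuclideanSpace ℝ (Fin d) → ℝ) (hπ_meas : Measurable π)
    (hπ_nonneg : ∀ x, 0 ≤ π x) (hπ_prob : ∫ x, π x = 1)
    (ψ : Measure (EuclideanSpace ℝ (Fin d))) [IsProbabilityMeasure ψ]
    (hψ_symm : Measure.map (fun v => -v) ψ = ψ)
    (ρ : Measure (EuclideanSpace ℝ (Fin d) × EuclideanSpace ℝ (Fin d)))
    (hρ : ρ = (volume.withDensity (fun x => ENNReal.ofReal (π x))).prod ψ)
    (lam : EuclideanSpace ℝ (Fin d) × EuclideanSpace ℝ (Fin d) → ℝ)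
    (hlam_meas : Measurable lam) (hlam_nonneg : ∀ z, 0 ≤ lam z)
    (hlam_int : Integrable lam ρ)
    (Qx : Kernel (EuclideanSpace ℝ (Fin d) × EuclideanSpace ℝ (Fin d))
      (EuclideanSpace ℝ (Fin d)))
    [IsMarkovKernel Qx]
    (hQx : ∀ x : EuclideanSpace ℝ (Fin d), ∀ B : Set (EuclideanSpace ℝ (Fin d)),
      MeasurableSet B →
      ∫⁻ v, ENNReal.ofReal (lam (x, v)) * Qx (x, v) B ∂ψ
        = ∫⁻ v' in B, ENNReal.ofReal (lam (x, -v')) ∂ψ) :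
    ∀ f : EuclideanSpace ℝ (Fin d) × EuclideanSpace ℝ (Fin d) → ℝ,
      Measurable f → (∃ C, ∀ z, |f z| ≤ C) →
      ∫ z, lam z * ∫ z', f z' ∂((Measure.dirac z.1).prod (Qx z)) ∂ρ
        = ∫ z', lam (z'.1, -z'.2) * f z' ∂ρ :=
  randomized_bounce_event_kernel_invariance_general π ψ ρ hρ lam hlam_meas hlam_nonneg hlam_int Qx
    hQx
end

section
/- Let (Ω, 𝒢, μ) be a measure space and let (ω,z) ↦ H_ω(z) be jointly measurable on Ω × ℝⁿ such that for each z the function ω ↦ H_ω(z) is μ-integrable, and define ρ(z) = exp(−∫ H_ω(z) μ(dω)). Let q : ℝⁿ × ℝⁿ → [0,∞) be a symmetric proposal density, q(z,z′) = q(z′,z), and define the acceptance probability a(z,z′) = exp(−∫ [H_ω(z′) − H_ω(z)]₊ μ(dω)), assuming ω ↦ [H_ω(z′) − H_ω(z)]₊ is μ-integrable for all z, z′. Then detailed balance holds: ρ(z) q(z,z′) a(z,z′) = ρ(z′) q(z′,z) a(z′,z) for all z, z′; hence the noisy Metropolis–Hastings kernel that proposes z* ∼ q(·|z) and accepts it with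 probability a(z,z*) is reversible with respect to the measure with density ρ. -/
open MeasureTheory Real

/- Both sides of detailed balance equal `exp (-∫ max (H ω z) (H ω z') dμ) * q z z'`: pointwise,
`H ω z + [H ω z' - H ω z]₊ = max (H ω z) (H ω z')`, which is symmetric in `z, z'`. -/

lemma add_max_sub_zero {α : Type*} [AddCommGroup α] [LinearOrder α] [IsOrderedAddMonoid α]
    (a b : α) : a + max (b - a) 0 = max a b := by
  rw [add_max, add_sub_cancel, add_zero, max_comm]

lemma integral_add_integral_max_sub_zero {Ω : Type*} [MeasurableSpace Ω] {μ : Measure Ω}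
    {f g : Ω → ℝ} (hf : Integrable f μ) (hgf : Integrable (fun ω => max (g ω - f ω) 0) μ) :
    ∫ ω, f ω ∂μ + ∫ ω, max (g ω - f ω) 0 ∂μ = ∫ ω, max (f ω) (g ω) ∂μ := by
  simp only [← integral_add hf hgf, add_max_sub_zero]

lemma integral_add_integral_max_sub_zero_comm {Ω : Type*} [MeasurableSpace Ω] {μ : Measure Ω}
    {f g : Ω → ℝ} (hf : Integrable f μ) (hg : Integrable g μ)
    (hgf : Integrable (fun ω => max (g ω - f ω) 0) μ)
    (hfg : Integrable (fun ω => max (f ω - g ω) 0) μ) :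
    ∫ ω, f ω ∂μ + ∫ ω, max (g ω - f ω) 0 ∂μ = ∫ ω, g ω ∂μ + ∫ ω, max (f ω - g ω) 0 ∂μ := by
  simp only [integral_add_integral_max_sub_zero hf hgf, integral_add_integral_max_sub_zero hg hfg,
    max_comm]

theorem noisy_mh_detailed_balance_general {n : ℕ}
    {Ω : Type*} [MeasurableSpace Ω] (μ : Measure Ω)
    (H : Ω → EuclideanSpace ℝ (Fin n) → ℝ)
    (hH_int : ∀ z, Integrable (fun ω => H ω z) μ)
    (hpos_int : ∀ z z', Integrable (fun ω => max (H ω z' - H ω z) 0) μ)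
    (q : EuclideanSpace ℝ (Fin n) → EuclideanSpace ℝ (Fin n) → ℝ)
    (hq_symm : ∀ z z', q z z' = q z' z) :
    ∀ z z' : EuclideanSpace ℝ (Fin n),
      Real.exp (-∫ ω, H ω z ∂μ) * q z z'
          * Real.exp (-∫ ω, max (H ω z' - H ω z) 0 ∂μ)
        = Real.exp (-∫ ω, H ω z' ∂μ) * q z' z
          * Real.exp (-∫ ω, max (H ω z - H ω z') 0 ∂μ) := by
  intro z z'
  rw [hq_symm z z', mul_right_comm, ← Real.exp_add, mul_right_comm (Real.exp _), ← Real.exp_add,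
    ← neg_add, ← neg_add, integral_add_integral_max_sub_zero_comm (hH_int z) (hH_int z')
      (hpos_int z z') (hpos_int z' z)]

/-- detailed balance for noisy Metropolis–Hastings with target
`ρ(z) = exp(−∫ H_ω(z) μ(dω))`, symmetric proposal density `q`, and acceptance probability
`a(z,z′) = exp(−∫ [H_ω(z′) − H_ω(z)]₊ μ(dω))`:
`ρ(z) q(z,z′) a(z,z′) = ρ(z′) q(z′,z) a(z′,z)` for all `z, z′`. -/
theorem noisy_mh_detailed_balance {n : ℕ}
    {Ω : Type*} [MeasurableSpace Ω] (μ : Measure Ω)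
    (H : Ω → EuclideanSpace ℝ (Fin n) → ℝ)
    (hH_meas : Measurable (Function.uncurry H))
    (hH_int : ∀ z, Integrable (fun ω => H ω z) μ)
    (hpos_int : ∀ z z', Integrable (fun ω => max (H ω z' - H ω z) 0) μ)
    (q : EuclideanSpace ℝ (Fin n) → EuclideanSpace ℝ (Fin n) → ℝ)
    (hq_nonneg : ∀ z z', 0 ≤ q z z')
    (hq_symm : ∀ z z', q z z' = q z' z) :
    ∀ z z' : EuclideanSpace ℝ (Fin n),
      Real.exp (-∫ ω, H ω z ∂μ) * q z z'
          * Real.exp (-∫ ω, max (H ω z' - H ω z) 0 ∂μ)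
        = Real.exp (-∫ ω, H ω z' ∂μ) * q z' z
          * Real.exp (-∫ ω, max (H ω z - H ω z') 0 ∂μ) :=
  noisy_mh_detailed_balance_general μ H hH_int hpos_int q hq_symm
end

section
/- Let π : ℝᵈ → ℝ be twice continuously differentiable, let x, v ∈ ℝᵈ, let w ∈ ℝᵈ be nonzero with ∇π(x) = c·w for some scalar c, and let Rv = v − 2 (⟨w,v⟩/|w|²) w be the reflection of v with respect to w. Then for every ε > 0, |π(x − εRv) − π(x + εv)| ≤ ε² |v|² · sup{ ‖Hess π(y)‖ : |y − x| ≤ ε|v| }, where ‖·‖ denotes the operator norm of the Hessian matrix. -/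
open scoped RealInnerProductSpace
open Metric Set Submodule

/-!
The reflection `R` in the hyperplane `wᗮ` satisfies `⟪w, R v⟫ = -⟪w, v⟫`, so a derivative
`Dπ(x) = c ⟪w, ·⟫` takes the same value at `-ε R v` and at `ε v`. Subtracting the first-order
Taylor expansions of `π` at `x` in these two directions, the linear terms cancel, and each
remainder is at most `M / 2 · (ε ‖v‖)²`, since `R` is an isometry and both displacements stay in
the ball of radius `ε ‖v‖`, on which `M` bounds the Hessian.
-/

section Reflection

variable {E : Type*} [NormedAddCommGroup E] [InnerProductSpace ℝ E]

theorem reflection_orthogonalComplement_singleton_apply (w v : E) :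
    reflection (ℝ ∙ w)ᗮ v = v - (2 * ⟪w, v⟫ / ‖w‖ ^ 2) • w := by
  rw [reflection_orthogonal_apply, reflection_singleton_apply, neg_sub, two_smul, ← add_smul]
  congr 2
  simp only [Real.ringHom_apply]
  ring

theorem inner_reflection_orthogonalComplement_singleton (w v : E) :
    ⟪w, reflection (ℝ ∙ w)ᗮ v⟫ = -⟪w, v⟫ := by
  calc ⟪w, reflection (ℝ ∙ w)ᗮ v⟫
      = ⟪reflection (ℝ ∙ w)ᗮ w, reflection (ℝ ∙ w)ᗮ (reflection (ℝ ∙ w)ᗮ v)⟫ :=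
        (LinearIsometryEquiv.inner_map_map _ _ _).symm
    _ = -⟪w, v⟫ := by
        rw [reflection_orthogonalComplement_singleton_eq_neg, reflection_reflection, inner_neg_left]

theorem fderiv_neg_reflection_of_gradient_eq_smul [CompleteSpace E] {f : E → ℝ} {x w : E} {c : ℝ}
    (hgrad : gradient f x = c • w) (u : E) :
    fderiv ℝ f x (-reflection (ℝ ∙ w)ᗮ u) = fderiv ℝ f x u := by
  rw [← inner_gradient_left, ← inner_gradient_left, hgrad, inner_neg_right,
    real_inner_smul_left, real_inner_smul_left, inner_reflection_orthogonalComplement_singleton]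
  ring

end Reflection

section Taylor

variable {E F : Type*} [NormedAddCommGroup E] [NormedSpace ℝ E]
  [NormedAddCommGroup F] [NormedSpace ℝ F] {f : E → F} {s : Set E} {M : ℝ}

theorem Convex.norm_fderiv_sub_le_of_norm_iteratedFDeriv_two_le (hf : ContDiff ℝ 2 f)
    (hs : Convex ℝ s) (hM : ∀ y ∈ s, ‖iteratedFDeriv ℝ 2 f y‖ ≤ M) {x y : E}
    (hx : x ∈ s) (hy : y ∈ s) : ‖fderiv ℝ f y - fderiv ℝ f x‖ ≤ M * ‖y - x‖ := by
  refine hs.norm_image_sub_le_of_norm_fderiv_le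
    (fun z _ => ((hf.fderiv_right le_rfl).differentiable one_ne_zero z)) (fun z hz => ?_) hx hy
  rw [← norm_iteratedFDeriv_one, norm_iteratedFDeriv_fderiv]
  exact hM z hz

theorem Convex.norm_sub_sub_fderiv_le_of_norm_iteratedFDeriv_two_le (hf : ContDiff ℝ 2 f)
    (hs : Convex ℝ s) (hM : ∀ y ∈ s, ‖iteratedFDeriv ℝ 2 f y‖ ≤ M) {x h : E}
    (hx : x ∈ s) (hxh : x + h ∈ s) :
    ‖f (x + h) - f x - fderiv ℝ f x h‖ ≤ M / 2 * ‖h‖ ^ 2 := by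
  have hseg : ∀ t ∈ Icc (0 : ℝ) 1, x + t • h ∈ s := fun t ht => by
    simpa using hs.add_smul_sub_mem hx hxh ht
  let φ : ℝ → F := fun t => f (x + t • h) - f x - t • fderiv ℝ f x h
  have hφ : ∀ t, HasDerivAt φ (fderiv ℝ f (x + t • h) h - fderiv ℝ f x h) t := fun t => by
    have hline : HasDerivAt (fun t : ℝ => x + t • h) h t := by
      simpa using ((hasDerivAt_id t).smul_const h).const_add x
    exact (((hf.differentiable two_ne_zero _).hasFDerivAt.comp_hasDerivAt t hline).sub_const
      (f x)).sub (by simpa using (hasDerivAt_id t).smul_const (fderiv ℝ f x h))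
  have hB : ∀ t, HasDerivAt (fun t => M / 2 * ‖h‖ ^ 2 * t ^ 2) (M * ‖h‖ ^ 2 * t) t := fun t => by
    refine ((hasDerivAt_pow 2 t).const_mul _).congr_deriv ?_
    push_cast
    ring
  have hφ' : ∀ t ∈ Ico (0 : ℝ) 1,
      ‖fderiv ℝ f (x + t • h) h - fderiv ℝ f x h‖ ≤ M * ‖h‖ ^ 2 * t := fun t ht => by
    calc ‖fderiv ℝ f (x + t • h) h - fderiv ℝ f x h‖
        ≤ ‖fderiv ℝ f (x + t • h) - fderiv ℝ f x‖ * ‖h‖ :=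
          (fderiv ℝ f (x + t • h) - fderiv ℝ f x).le_opNorm h
      _ ≤ M * ‖(x + t • h) - x‖ * ‖h‖ := by
          gcongr
          exact hs.norm_fderiv_sub_le_of_norm_iteratedFDeriv_two_le hf hM hx
            (hseg t (Ico_subset_Icc_self ht))
      _ = M * ‖h‖ ^ 2 * t := by
          rw [add_sub_cancel_left, norm_smul, Real.norm_of_nonneg ht.1]
          ring
  have := image_norm_le_of_norm_deriv_right_le_deriv_boundary
    (fun t _ => (hφ t).continuousAt.continuousWithinAt) (fun t _ => (hφ t).hasDerivWithinAt)
    (by simp [φ]) hB hφ' (right_mem_Icc.2 zero_le_one)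
  simpa [φ] using this

end Taylor

theorem bounce_flip_second_order_bound_general {d : ℕ}
    (π : EuclideanSpace ℝ (Fin d) → ℝ) (hπ : ContDiff ℝ 2 π)
    (x v w : EuclideanSpace ℝ (Fin d))
    (c : ℝ) (hgrad : gradient π x = c • w)
    (Rv : EuclideanSpace ℝ (Fin d))
    (hRv : Rv = v - (2 * ⟪w, v⟫ / ‖w‖ ^ 2) • w) :
    ∀ ε : ℝ, 0 < ε →
      |π (x - ε • Rv) - π (x + ε • v)|
        ≤ ε ^ 2 * ‖v‖ ^ 2
          * sSup ((fun y => ‖iteratedFDeriv ℝ 2 π y‖) '' Metric.closedBall x (ε * ‖v‖)) := by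
  intro ε hε
  set B := closedBall x (ε * ‖v‖)
  set M := sSup ((fun y => ‖iteratedFDeriv ℝ 2 π y‖) '' B)
  have hM : ∀ y ∈ B, ‖iteratedFDeriv ℝ 2 π y‖ ≤ M := fun y hy =>
    le_csSup ((isCompact_closedBall x _).bddAbove_image
      (hπ.continuous_iteratedFDeriv le_rfl).norm.continuousOn) (mem_image_of_mem _ hy)
  set R := reflection (ℝ ∙ w)ᗮ
  have hnorm_v : ‖ε • v‖ = ε * ‖v‖ := by rw [norm_smul, Real.norm_of_nonneg hε.le]
  have hmem : ∀ h, ‖h‖ = ε * ‖v‖ → x + h ∈ B := fun h hh => by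
    rw [mem_closedBall_iff_norm, add_sub_cancel_left, hh]
  have hnorm_Rv : ‖-R (ε • v)‖ = ε * ‖v‖ := by
    rw [norm_neg, LinearIsometryEquiv.norm_map, hnorm_v]
  have hx : x ∈ B := mem_closedBall_self (by positivity)
  have hflip := (convex_closedBall x _).norm_sub_sub_fderiv_le_of_norm_iteratedFDeriv_two_le
    hπ hM hx (hmem _ hnorm_Rv)
  have hstay := (convex_closedBall x _).norm_sub_sub_fderiv_le_of_norm_iteratedFDeriv_two_le
    hπ hM hx (hmem _ hnorm_v)
  have hRε : ε • Rv = R (ε • v) := by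
    rw [map_smul, hRv, reflection_orthogonalComplement_singleton_apply]
  calc |π (x - ε • Rv) - π (x + ε • v)|
      = ‖(π (x + -R (ε • v)) - π x - fderiv ℝ π x (-R (ε • v)))
          - (π (x + ε • v) - π x - fderiv ℝ π x (ε • v))‖ := by
        rw [fderiv_neg_reflection_of_gradient_eq_smul hgrad, hRε, ← sub_eq_add_neg,
          Real.norm_eq_abs]
        ring_nf
    _ ≤ M / 2 * (ε * ‖v‖) ^ 2 + M / 2 * (ε * ‖v‖) ^ 2 := by
        rw [hnorm_Rv] at hflip
        rw [hnorm_v] at hstay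
        exact norm_sub_le_of_le hflip hstay
    _ = ε ^ 2 * ‖v‖ ^ 2 * M := by ring

/-- second-order cancellation for the bounce move. If `∇π(x)` is parallel to
the reflection direction `w`, then the first-order Taylor terms of `π(x − εRv)` and
`π(x + εv)` cancel, giving the bound
`|π(x − εRv) − π(x + εv)| ≤ ε² |v|² sup{‖Hess π(y)‖ : |y − x| ≤ ε|v|}`,
where the Hessian norm is the norm of the second iterated derivative. -/
theorem bounce_flip_second_order_bound {d : ℕ}
    (π : EuclideanSpace ℝ (Fin d) → ℝ) (hπ : ContDiff ℝ 2 π)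
    (x v w : EuclideanSpace ℝ (Fin d)) (hw : w ≠ 0)
    (c : ℝ) (hgrad : gradient π x = c • w)
    (Rv : EuclideanSpace ℝ (Fin d))
    (hRv : Rv = v - (2 * ⟪w, v⟫ / ‖w‖ ^ 2) • w) :
    ∀ ε : ℝ, 0 < ε →
      |π (x - ε • Rv) - π (x + ε • v)|
        ≤ ε ^ 2 * ‖v‖ ^ 2
          * sSup ((fun y => ‖iteratedFDeriv ℝ 2 π y‖) '' Metric.closedBall x (ε * ‖v‖)) :=
  bounce_flip_second_order_bound_general π hπ x v w c hgrad Rv hRv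
end

section
/- Let I be a finite set of size N, let p̄ ∈ (0,1], and let (pᵢ)_{i∈I} satisfy 0 ≤ pᵢ ≤ p̄. Consider the following random procedure: draw S ∼ Binomial(N, p̄); given S = s, choose a subset 𝒮 ⊆ I of size s uniformly at random; for each i ∈ 𝒮 independently set Xᵢ = 1 with probability pᵢ/p̄ and Xᵢ = 0 otherwise; for each i ∉ 𝒮 set Xᵢ = 0. Then the resulting random variables (Xᵢ)_{i∈I} are independent with Xᵢ ∼ Bernoulli(pᵢ); that is, for every A ⊆ I, the probability that Xᵢ = 1 for all i ∈ A and Xᵢ = 0 for all i ∉ A equals Π_{i∈A} pᵢ · Π_{i∉A} (1 − pᵢ). -/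
/-!
Mixing uniform `s`-subsets with binomial weights gives each subset `S` the weight
`p̄ ^ #S * (1 - p̄) ^ (N - #S)`, i.e. each index is selected independently with probability `p̄`.
After thinning, an index of `A` contributes `p̄ * (pᵢ / p̄) = pᵢ`, and summing over whether an
index outside `A` was selected contributes `(p̄ - pᵢ) + (1 - p̄) = 1 - pᵢ`; the sum over subsets
factorises by `Finset.prod_add`.
-/

open Finset

section

variable {I K : Type*} [Fintype I] [Field K]

theorem sum_binomial_mixture_filter_card [CharZero K] (q r : K)
    (P : Finset I → Prop) [DecidablePred P] (f : Finset I → K) :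
    ∑ s ∈ range (Fintype.card I + 1),
        ((Fintype.card I).choose s * q ^ s * r ^ (Fintype.card I - s))
          * ((Fintype.card I).choose s : K)⁻¹
          * ∑ S ∈ univ.powerset.filter (fun S => S.card = s ∧ P S), f S
      = ∑ S ∈ univ.powerset.filter P, q ^ S.card * r ^ (Fintype.card I - S.card) * f S := by
  rw [← sum_fiberwise_of_maps_to (g := card) (t := range (Fintype.card I + 1))
    fun S _ => mem_range_succ_iff.2 (card_le_univ S)]
  refine sum_congr rfl fun s hs => ?_
  have hchoose : ((Fintype.card I).choose s : K) ≠ 0 :=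
    Nat.cast_ne_zero.2 (Nat.choose_pos (mem_range_succ_iff.1 hs)).ne'
  rw [filter_filter, mul_sum]
  refine sum_congr (filter_congr fun S _ => and_comm) fun S hS => ?_
  rw [(mem_filter.1 hS).2.2]
  field_simp

variable [DecidableEq I]

theorem sum_filter_superset_eq_sum_powerset_compl {M : Type*} [AddCommMonoid M]
    (A : Finset I) (f : Finset I → M) :
    ∑ S ∈ univ.powerset.filter (A ⊆ ·), f S = ∑ T ∈ Aᶜ.powerset, f (A ∪ T) := by
  have hIcc : univ.powerset.filter (A ⊆ ·) = Icc A univ := by ext; simp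
  rw [hIcc, Icc_eq_image_powerset (subset_univ A), ← compl_eq_univ_sdiff, sum_image]
  intro T hT T' hT' hunion
  rw [coe_powerset, Set.mem_preimage, Set.mem_powerset_iff, coe_subset,
    subset_compl_iff_disjoint_right] at hT hT'
  rw [← union_sdiff_cancel_left hT.symm, ← union_sdiff_cancel_left hT'.symm]
  exact congrArg (· \ A) hunion

theorem subsample_thin_weight_union {q : K} (hq : q ≠ 0) (p : I → K)
    {A T : Finset I} (hT : T ⊆ Aᶜ) :
    q ^ (A ∪ T).card * (1 - q) ^ (Fintype.card I - (A ∪ T).card)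
        * ((∏ i ∈ A, p i / q) * ∏ i ∈ (A ∪ T) \ A, (1 - p i / q))
      = (∏ i ∈ A, p i) * ((∏ i ∈ T, (q - p i)) * ∏ _i ∈ Aᶜ \ T, (1 - q)) := by
  have hdisj : Disjoint A T := (subset_compl_iff_disjoint_right.1 hT).symm
  have hcompl : Fintype.card I - (A ∪ T).card = (Aᶜ \ T).card := by
    rw [card_sdiff_of_subset hT, card_compl, card_union_of_disjoint hdisj, Nat.sub_add_eq]
  rw [union_sdiff_cancel_left hdisj, hcompl, card_union_of_disjoint hdisj, pow_add,
    ← prod_const (1 - q)]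
  calc q ^ A.card * q ^ T.card * (∏ _i ∈ Aᶜ \ T, (1 - q))
          * ((∏ i ∈ A, p i / q) * ∏ i ∈ T, (1 - p i / q))
        = (q ^ A.card * ∏ i ∈ A, p i / q)
          * ((q ^ T.card * ∏ i ∈ T, (1 - p i / q)) * ∏ _i ∈ Aᶜ \ T, (1 - q)) := by ring
    _ = _ := by
      rw [pow_card_mul_prod, pow_card_mul_prod]
      congr 1
      · exact prod_congr rfl fun i _ => mul_div_cancel₀ _ hq
      · congr 1
        exact prod_congr rfl fun i _ => by rw [mul_one_sub, mul_div_cancel₀ _ hq]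

theorem sum_subsample_thin_weight_superset {q : K} (hq : q ≠ 0)
    (p : I → K) (A : Finset I) :
    ∑ S ∈ univ.powerset.filter (A ⊆ ·), q ^ S.card * (1 - q) ^ (Fintype.card I - S.card)
        * ((∏ i ∈ A, p i / q) * ∏ i ∈ S \ A, (1 - p i / q))
      = (∏ i ∈ A, p i) * ∏ i ∈ Aᶜ, (1 - p i) := by
  rw [sum_filter_superset_eq_sum_powerset_compl,
    sum_congr rfl fun T hT => subsample_thin_weight_union hq p (mem_powerset.1 hT), ← mul_sum,
    ← prod_add]
  exact congrArg _ (prod_congr rfl fun i _ => by ring)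

end

theorem binomial_subsampling_correct_general {I : Type*} [Fintype I] [DecidableEq I]
    (pbar : ℝ) (hpbar : pbar ∈ Set.Ioc (0 : ℝ) 1)
    (p : I → ℝ) :
    ∀ A : Finset I,
      ∑ s ∈ Finset.range (Fintype.card I + 1),
        (((Fintype.card I).choose s : ℝ) * pbar ^ s
            * (1 - pbar) ^ (Fintype.card I - s))
          * (((Fintype.card I).choose s : ℝ))⁻¹
          * ∑ 𝒮 ∈ Finset.univ.powerset.filter
              (fun 𝒮 : Finset I => 𝒮.card = s ∧ A ⊆ 𝒮),
              (∏ i ∈ A, p i / pbar) * ∏ i ∈ 𝒮 \ A, (1 - p i / pbar)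
      = (∏ i ∈ A, p i) * ∏ i ∈ Aᶜ, (1 - p i) := by
  intro A
  rw [sum_binomial_mixture_filter_card pbar (1 - pbar) (A ⊆ ·)]
  exact sum_subsample_thin_weight_superset hpbar.1.ne' p A

/-- correctness of the binomial subsampling scheme. Drawing
`S ∼ Binomial(N, p̄)`, then a uniformly random subset `𝒮` of size `S`, and thinning each
`i ∈ 𝒮` with probability `pᵢ/p̄`, produces independent `Bernoulli(pᵢ)` indicators: for every
`A ⊆ I`, the probability that `Xᵢ = 1` exactly for `i ∈ A` equals
`Π_{i∈A} pᵢ · Π_{i∉A} (1 − pᵢ)`. -/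
theorem binomial_subsampling_correct {I : Type*} [Fintype I] [DecidableEq I]
    (pbar : ℝ) (hpbar : pbar ∈ Set.Ioc (0 : ℝ) 1)
    (p : I → ℝ) (hp : ∀ i, p i ∈ Set.Icc (0 : ℝ) pbar) :
    ∀ A : Finset I,
      ∑ s ∈ Finset.range (Fintype.card I + 1),
        (((Fintype.card I).choose s : ℝ) * pbar ^ s
            * (1 - pbar) ^ (Fintype.card I - s))
          * (((Fintype.card I).choose s : ℝ))⁻¹
          * ∑ 𝒮 ∈ Finset.univ.powerset.filter
              (fun 𝒮 : Finset I => 𝒮.card = s ∧ A ⊆ 𝒮),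
              (∏ i ∈ A, p i / pbar) * ∏ i ∈ 𝒮 \ A, (1 - p i / pbar)
      = (∏ i ∈ A, p i) * ∏ i ∈ Aᶜ, (1 - p i) :=
  binomial_subsampling_correct_general pbar hpbar p
end
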